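/- arXiv:1701.02126 — 9 statements merged into one kernel-verified Lean document; each statement's English description precedes it below -/
import Mathlib

section
/- If a chemical reaction network is strongly endotactic, then for every nonempty subset P ⊂ {1,…,d} with R(P) ≠ ∅, the restricted network (with reaction set R(P)) is strongly P-endotactic, i.e. for every w ∈ ℝ^d with nonzero projection onto the coordinates in P, the set R(P)_w contains at least one w-dissipative reaction and no w-explosive reaction. -/
open Real Filter Finset Set MeasureTheory
open scoped Classical

noncomputable section

/-- A chemical reaction network on `d` species with `m` reactions. -/
structure CRN (d m : ℕ) where
  cin : Fin m → Fin d → ℕ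
  cout : Fin m → Fin d → ℕ
  k : Fin m → ℝ
  k_pos : ∀ r, 0 < k r

namespace CRN

variable {d m : ℕ}

/-- The reaction vector `c^r = c_out^r - c_in^r`. -/
def cvec (N : CRN d m) (r : Fin m) : Fin d → ℝ := fun i => (N.cout r i : ℝ) - (N.cin r i : ℝ)

/-- Mass-action rate `λ_r`. -/
def lam (N : CRN d m) (r : Fin m) (x : Fin d → ℝ) : ℝ := N.k r * ∏ i, x i ^ (N.cin r i)

/-- Volume-normalized jump rate `Λ_r^{(v)}`. -/
def jump (N : CRN d m) (v : ℝ) (r : Fin m) (x : Fin d → ℝ) : ℝ :=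
  N.k r / v ^ (∑ i, N.cin r i) * ∏ i, ∏ l ∈ Finset.range (N.cin r i), (v * x i - (l : ℝ))

/-- Reactions whose input complex is `w`-maximal among all input complexes. -/
def Rw (N : CRN d m) (w : Fin d → ℝ) : Set (Fin m) :=
  {r | ∀ r', 0 ≤ ∑ i, w i * ((N.cin r i : ℝ) - (N.cin r' i : ℝ))}

/-- Strongly endotactic network. -/
def StronglyEndotactic (N : CRN d m) : Prop :=
  ∀ w : Fin d → ℝ, w ≠ 0 →
    (∃ r ∈ N.Rw w, ∑ i, w i * N.cvec r i < 0) ∧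
    ∀ r ∈ N.Rw w, ∑ i, w i * N.cvec r i ≤ 0

/-- A siphon. -/
def IsSiphon (N : CRN d m) (P : Finset (Fin d)) : Prop :=
  P.Nonempty ∧ ∀ r, (∃ i ∈ P, 0 < N.cout r i) → ∃ i ∈ P, 0 < N.cin r i

/-- Reactions with substrates only from `P`. -/
def RP (N : CRN d m) (P : Finset (Fin d)) : Set (Fin m) := {r | ∀ i ∉ P, N.cin r i = 0}

/-- Reactions of `R(P)` whose input complex is `w`-maximal within `R(P)`. -/
def RPw (N : CRN d m) (P : Finset (Fin d)) (w : Fin d → ℝ) : Set (Fin m) :=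
  {r | r ∈ N.RP P ∧ ∀ r' ∈ N.RP P, 0 ≤ ∑ i, w i * ((N.cin r i : ℝ) - (N.cin r' i : ℝ))}

/-- The products of reaction `r` lie in `P`. -/
def OutIn (N : CRN d m) (P : Finset (Fin d)) (r : Fin m) : Prop := ∀ i ∉ P, N.cout r i = 0

/-- `w`-dissipative reaction. -/
def Dissipative (N : CRN d m) (P : Finset (Fin d)) (w : Fin d → ℝ) (r : Fin m) : Prop :=
  ¬ N.OutIn P r ∨ ∑ i, w i * N.cvec r i < 0

/-- `w`-explosive reaction. -/
def Explosive (N : CRN d m) (P : Finset (Fin d)) (w : Fin d → ℝ) (r : Fin m) : Prop :=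
  N.OutIn P r ∧ 0 < ∑ i, w i * N.cvec r i

end CRN

/-- Chemical Lyapunov function `U(x) = d + 1 + ∑ x_i (log x_i - 1)`. -/
def U (n : ℕ) (x : Fin n → ℝ) : ℝ := n + 1 + ∑ i, x i * (Real.log (x i) - 1)

/-- Euclidean inner product. -/
def dot {n : ℕ} (a b : Fin n → ℝ) : ℝ := ∑ i, a i * b i

namespace CRN

variable {d m : ℕ}

/-- `h_r^{(v)}(x) = ⟨∇_r^{(v)} U(x), c^r⟩`. -/
def hrv (N : CRN d m) (P : Finset (Fin d)) (v : ℝ) (r : Fin m) (x : Fin d → ℝ) : ℝ :=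
  ∑ i, (if i ∈ P then Real.log (x i)
        else if N.cout r i ≠ 0 then Real.log (N.cvec r i / v) else 0) * N.cvec r i

/-- `Q_r^{(v)}(x) = (U(x + v⁻¹ c^r)/U(x))^v`. -/
def Qrv (N : CRN d m) (v : ℝ) (r : Fin m) (x : Fin d → ℝ) : ℝ :=
  (U d (fun i => x i + N.cvec r i / v) / U d x) ^ v

/-- `L_r^{(v)}(x) = U(x) (Q_r^{(v)}(x) - 1)`. -/
def Lrv (N : CRN d m) (v : ℝ) (r : Fin m) (x : Fin d → ℝ) : ℝ :=
  U d x * (N.Qrv v r x - 1)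

/-- The modified network `C_{u,P}`: outputs of reactions not in `R(P)_u` are restricted to `P`. -/
def modify (N : CRN d m) (P : Finset (Fin d)) (u : Fin d → ℝ) : CRN d m where
  cin := N.cin
  cout := fun r i => if i ∈ P ∨ r ∈ N.RPw P u then N.cout r i else 0
  k := N.k
  k_pos := N.k_pos

/-- The nested sets `super_k` of a frame. -/
def superN (N : CRN d m) (P : Finset (Fin d)) {L : ℕ} (wbar : Fin L → Fin d → ℝ) : ℕ → Set (Fin m)
  | 0 => N.RP P
  | (k+1) =>
    if h : k < L then
      {r | r ∈ N.superN P wbar k ∧ ∀ r' ∈ N.superN P wbar k,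
        0 ≤ ∑ i, wbar ⟨k, h⟩ i * ((N.cin r i : ℝ) - (N.cin r' i : ℝ))}
    else N.superN P wbar k

/-- Species reachable in `k` steps starting from reactions with no inputs. -/
def reachSet (N : CRN d m) : ℕ → Set (Fin d)
  | 0 => ∅
  | (k+1) => N.reachSet k ∪
      {i | ∃ r, 0 < N.cout r i ∧ ∀ l, 0 < N.cin r l → l ∈ N.reachSet k}

/-- The Lagrangian `L(λ, ξ)`. -/
def Lagr (N : CRN d m) (lamv : Fin m → ℝ) (ξ : Fin d → ℝ) : ℝ :=
  ⨆ θ : Fin d → ℝ, ((∑ i, θ i * ξ i) - ∑ r, lamv r * (Real.exp (∑ i, θ i * N.cvec r i) - 1))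

end CRN

/-- A frame: an ordered orthonormal family supported on `P`. -/
structure Frame (d : ℕ) (P : Finset (Fin d)) (dstar : ℕ) where
  w : Fin dstar → Fin d → ℝ
  ortho : ∀ k l, dot (w k) (w l) = if k = l then 1 else 0
  suppP : ∀ k, ∀ i ∉ P, w k i = 0

/-- A `(v',P)`-divergent volume-jet framed by `F` and adapted to the network `N`. -/
structure VolJet {d m : ℕ} (N : CRN d m) (P : Finset (Fin d)) {dstar : ℕ}
    (F : Frame d P dstar) (v' : ℝ → ℝ) where
  v : ℕ → ℝ
  θ : ℕ → ℝ
  w : ℕ → Fin d → ℝ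
  θ_gt : ∀ j, 1 < θ j
  θ_top : Tendsto θ atTop atTop
  conic : ∀ j, ∃ a : Fin dstar → ℝ, (∀ k, 0 ≤ a k) ∧ ∀ i, w j i = ∑ k, a k * F.w k i
  unit : ∀ j, dot (w j) (w j) = 1
  beta_ratio : ∀ (k : ℕ) (hk : k + 1 < dstar),
    Tendsto (fun j => dot (w j) (F.w ⟨k + 1, hk⟩) / dot (w j) (F.w ⟨k, Nat.lt_of_succ_lt hk⟩))
      atTop (nhds 0)
  adapted_sign : ∀ r ∈ N.RP P, N.OutIn P r →
    (∀ j, dot (w j) (N.cvec r) < 0) ∨ (∀ j, dot (w j) (N.cvec r) = 0) ∨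
      (∀ j, 0 < dot (w j) (N.cvec r))
  adapted_theta : ∀ k : Fin dstar,
    (∃ L : ℝ, Tendsto (fun j => θ j ^ dot (w j) (F.w k)) atTop (nhds L)) ∨
      Tendsto (fun j => θ j ^ dot (w j) (F.w k)) atTop atTop
  vx_nat : ∀ j, ∀ i ∈ P, ∃ n : ℕ, 0 < n ∧ v j * θ j ^ (w j i) = n
  v_big : ∀ j, v' (∑ i ∈ P, θ j ^ (w j i)) < v j
  x_div : Tendsto (fun j => ∑ i ∈ P, θ j ^ (w j i)) atTop atTop

/-- The spatial trajectory of a volume-jet. -/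
def VolJet.x {d m : ℕ} {N : CRN d m} {P : Finset (Fin d)} {dstar : ℕ} {F : Frame d P dstar}
    {v' : ℝ → ℝ} (J : VolJet N P F v') (j : ℕ) : Fin d → ℝ :=
  fun i => if i ∈ P then J.θ j ^ (J.w j i) else 0

/-- Reachability sets for a polynomial system. -/
def polyReach (d : ℕ) (Q : Fin d → MvPolynomial (Fin d) ℝ) : ℕ → Set (Fin d)
  | 0 => ∅
  | (k+1) => polyReach d Q k ∪
      {i | ∃ s : Fin d →₀ ℕ, 0 < MvPolynomial.coeff s (Q i) ∧ ∀ l, s l ≠ 0 → l ∈ polyReach d Q k}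

theorem stmt1 {d m : ℕ} (N : CRN d m) (hend : N.StronglyEndotactic)
    (P : Finset (Fin d)) (hP : P.Nonempty) (hPstrict : P ⊂ Finset.univ)
    (hRP : (N.RP P).Nonempty) :
    ∀ w : Fin d → ℝ, (∃ i ∈ P, w i ≠ 0) →
      (∃ r ∈ N.RPw P w, N.Dissipative P w r) ∧
      ∀ r ∈ N.RPw P w, ¬ N.Explosive P w r := by
  intro w _
  -- S r : weighted input on P ; T r : total input off P
  set S : Fin m → ℝ := fun r => ∑ i ∈ P, w i * (N.cin r i : ℝ) with hS
  set T : Fin m → ℝ := fun r => ∑ i ∈ Pᶜ, (N.cin r i : ℝ) with hT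
  set M : ℝ := 2 * ∑ r, |S r| + 1 with hM
  set wt : Fin d → ℝ := fun i => if i ∈ P then w i else -M with hwt
  have hsumabs : (0:ℝ) ≤ ∑ r, |S r| := Finset.sum_nonneg fun r _ => abs_nonneg _
  have hM1 : (1:ℝ) ≤ M := by simp only [hM]; linarith
  have habs : ∀ r : Fin m, |S r| ≤ ∑ r', |S r'| := fun r =>
    Finset.single_le_sum (fun r' _ => abs_nonneg (S r')) (Finset.mem_univ r)
  -- T is 0 on RP, ≥ 1 off RP
  have hT0 : ∀ r ∈ N.RP P, T r = 0 := by
    intro r hr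
    apply Finset.sum_eq_zero
    intro i hi
    rw [hr i (Finset.mem_compl.mp hi)]
    simp
  have hT1 : ∀ r, r ∉ N.RP P → 1 ≤ T r := by
    intro r hr
    simp only [CRN.RP, Set.mem_setOf_eq, not_forall] at hr
    obtain ⟨i, hiP, hi0⟩ := hr
    calc (1:ℝ) ≤ (N.cin r i : ℝ) := by exact_mod_cast Nat.one_le_iff_ne_zero.mpr hi0
    _ ≤ T r := Finset.single_le_sum (f := fun i => (N.cin r i : ℝ))
        (fun j _ => Nat.cast_nonneg _) (Finset.mem_compl.mpr hiP)
  have hTnonneg : ∀ r, 0 ≤ T r := fun r =>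
    Finset.sum_nonneg fun i _ => Nat.cast_nonneg _
  -- splitting the wt-pairing
  have hsplit : ∀ r r', ∑ i, wt i * ((N.cin r i : ℝ) - (N.cin r' i : ℝ)) =
      (S r - S r') - M * (T r - T r') := by
    intro r r'
    rw [← Finset.sum_add_sum_compl P]
    have h1 : ∑ i ∈ P, wt i * ((N.cin r i : ℝ) - (N.cin r' i : ℝ)) = S r - S r' := by
      rw [hS]
      simp only
      rw [← Finset.sum_sub_distrib]
      apply Finset.sum_congr rfl
      intro i hi
      simp only [hwt, if_pos hi]
      ring
    have h2 : ∑ i ∈ Pᶜ, wt i * ((N.cin r i : ℝ) - (N.cin r' i : ℝ)) = -(M * (T r - T r')) := by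
      rw [hT]
      simp only
      rw [← Finset.sum_sub_distrib, Finset.mul_sum, ← Finset.sum_neg_distrib]
      apply Finset.sum_congr rfl
      intro i hi
      simp only [hwt, if_neg (Finset.mem_compl.mp hi)]
      ring
    rw [h1, h2]; ring
  -- wt ≠ 0
  have hwt_ne : wt ≠ 0 := by
    obtain ⟨i, _, hiP⟩ := Finset.exists_of_ssubset hPstrict
    intro h
    have := congrFun h i
    simp only [hwt, if_neg hiP, Pi.zero_apply] at this
    linarith
  -- pairing with cvec agrees when reaction is confined to P
  have hcvec : ∀ r ∈ N.RP P, N.OutIn P r →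
      ∑ i, wt i * N.cvec r i = ∑ i, w i * N.cvec r i := by
    intro r hr hout
    apply Finset.sum_congr rfl
    intro i _
    by_cases hi : i ∈ P
    · simp [hwt, hi]
    · have : N.cvec r i = 0 := by
        simp [CRN.cvec, hr i hi, hout i hi]
      simp [this]
  -- Rw wt ⊆ RPw P w
  have hRw_sub : ∀ r ∈ N.Rw wt, r ∈ N.RPw P w := by
    intro r hr
    obtain ⟨r0, hr0⟩ := hRP
    have hrRP : r ∈ N.RP P := by
      by_contra hnot
      have h1 := hr r0
      rw [hsplit r r0, hT0 r0 hr0] at h1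
      have h2 := hT1 r hnot
      have h3 : S r ≤ |S r| := le_abs_self _
      have h4 : -S r0 ≤ |S r0| := neg_le_abs _
      have h5 := habs r
      have h6 := habs r0
      have h7 : M * 1 ≤ M * T r := by
        apply mul_le_mul_of_nonneg_left h2; linarith
      simp only [hM] at h7 ⊢
      nlinarith
    refine ⟨hrRP, ?_⟩
    intro r' hr'
    have h1 := hr r'
    rw [hsplit r r', hT0 r hrRP, hT0 r' hr'] at h1
    have heq : ∑ i, w i * ((N.cin r i : ℝ) - (N.cin r' i : ℝ)) = S r - S r' := by
      rw [hS]
      simp only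
      rw [← Finset.sum_sub_distrib]
      rw [← Finset.sum_subset (Finset.subset_univ P)]
      · apply Finset.sum_congr rfl; intro i _; ring
      · intro i _ hi
        rw [hrRP i hi, hr' i hi]
        simp
    rw [heq]; linarith
  -- RPw P w ⊆ Rw wt
  have hRPw_sub : ∀ r ∈ N.RPw P w, r ∈ N.Rw wt := by
    intro r hr r'
    obtain ⟨hrRP, hrmax⟩ := hr
    rw [hsplit r r', hT0 r hrRP]
    by_cases hr' : r' ∈ N.RP P
    · have h1 := hrmax r' hr'
      have heq : ∑ i, w i * ((N.cin r i : ℝ) - (N.cin r' i : ℝ)) = S r - S r' := by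
        rw [hS]
        simp only
        rw [← Finset.sum_sub_distrib]
        rw [← Finset.sum_subset (Finset.subset_univ P)]
        · apply Finset.sum_congr rfl; intro i _; ring
        · intro i _ hi
          rw [hrRP i hi, hr' i hi]
          simp
      rw [hT0 r' hr']
      rw [heq] at h1
      linarith
    · have h2 := hT1 r' hr'
      have h3 : -S r ≤ |S r| := neg_le_abs _
      have h4 : S r' ≤ |S r'| := le_abs_self _
      have h5 := habs r
      have h6 := habs r'
      have h7 : M * 1 ≤ M * T r' := by
        apply mul_le_mul_of_nonneg_left h2; linarith
      simp only [hM] at h7 ⊢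
      nlinarith
  obtain ⟨⟨r, hrRw, hrneg⟩, hmax⟩ := hend wt hwt_ne
  constructor
  · refine ⟨r, hRw_sub r hrRw, ?_⟩
    by_cases hout : N.OutIn P r
    · right
      rw [← hcvec r (hRw_sub r hrRw).1 hout]
      exact hrneg
    · left; exact hout
  · rintro r' hr' ⟨hout, hpos⟩
    have h1 := hmax r' (hRPw_sub r' hr')
    rw [hcvec r' hr'.1 hout] at h1
    linarith

end
end

section
/- The supremum over all x ∈ (v⁻¹ℕ)^d of the quantity (d + ‖log x‖₂²)/(v · U(x)) tends to 0 as v → ∞, where (v⁻¹ℕ)^d denotes the set of x ∈ ℝ^d with v·x_i a strictly positive integer for every i; consequently also the supremum over such x of 2‖log x‖₁/(v · U(x)) tends to 0 as v → ∞. -/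
open Real Filter Finset Set MeasureTheory
open scoped Classical

noncomputable section

lemma entropy_term_nonneg {t : ℝ} (ht : 0 < t) : 0 ≤ t * (Real.log t - 1) + 1 := by
  have h := Real.one_sub_inv_le_log_of_pos ht
  have h2 : t * (1 - t⁻¹) ≤ t * Real.log t :=
    mul_le_mul_of_nonneg_left h ht.le
  have h3 : t * (1 - t⁻¹) = t - 1 := by field_simp
  nlinarith

lemma U_ge_one {n : ℕ} {x : Fin n → ℝ} (hx : ∀ i, 0 < x i) : 1 ≤ U n x := by
  have h : U n x = 1 + ∑ i, (x i * (Real.log (x i) - 1) + 1) := by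
    simp [U, Finset.sum_add_distrib]; ring
  have h2 : 0 ≤ ∑ i, (x i * (Real.log (x i) - 1) + 1) :=
    Finset.sum_nonneg fun i _ => entropy_term_nonneg (hx i)
  linarith [h.ge, h.le]

lemma logsq_le_four_mul {t : ℝ} (ht : 1 ≤ t) : (Real.log t) ^ 2 ≤ 4 * t := by
  have ht0 : (0:ℝ) < t := by linarith
  have hs : Real.log t = 2 * Real.log (Real.sqrt t) := by
    rw [Real.log_sqrt ht0.le]; ring
  have h1 : Real.log (Real.sqrt t) ≤ Real.sqrt t - 1 :=
    Real.log_le_sub_one_of_pos (Real.sqrt_pos.2 ht0)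
  have h0 : 0 ≤ Real.log t := Real.log_nonneg ht
  have hsq : Real.sqrt t ^ 2 = t := Real.sq_sqrt ht0.le
  have hsn : 0 ≤ Real.sqrt t := Real.sqrt_nonneg t
  nlinarith [sq_nonneg (Real.log (Real.sqrt t))]

lemma logsq_le_entropy {t : ℝ} (ht : 1 ≤ t) :
    (Real.log t) ^ 2 ≤ 4 + 4 * (t * (Real.log t - 1) + 1) := by
  have ht0 : (0:ℝ) < t := by linarith
  rcases le_or_gt (Real.log t) 2 with h | h
  · have h0 : 0 ≤ Real.log t := Real.log_nonneg ht
    have := entropy_term_nonneg ht0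
    nlinarith
  · have h4 := logsq_le_four_mul ht
    nlinarith

lemma logsq_bound {v t : ℝ} (hv : 1 ≤ v) (ht : 0 < t) (hvt : 1 / v ≤ t) :
    (Real.log t) ^ 2 ≤ (Real.log v) ^ 2 + 4 + 4 * (t * (Real.log t - 1) + 1) := by
  rcases le_or_gt 1 t with h | h
  · have := logsq_le_entropy h
    nlinarith [sq_nonneg (Real.log v)]
  · have hv0 : (0:ℝ) < v := by linarith
    have hlo : -Real.log v ≤ Real.log t := by
      have h2 := Real.log_le_log (by positivity : (0:ℝ) < 1 / v) hvt
      rwa [Real.log_div one_ne_zero hv0.ne', Real.log_one, zero_sub] at h2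
    have hhi : Real.log t ≤ 0 := Real.log_nonpos ht.le h.le
    have hlv : 0 ≤ Real.log v := Real.log_nonneg hv
    have := entropy_term_nonneg ht
    nlinarith

lemma main_bound {d : ℕ} {v : ℝ} (hv : 1 ≤ v) {x : Fin d → ℝ}
    (hx : ∀ i, ∃ n : ℕ, 0 < n ∧ x i = (n : ℝ) / v) :
    ((d : ℝ) + ∑ i, Real.log (x i) ^ 2) / (v * U d x) ≤
      ((d : ℝ) * (Real.log v) ^ 2 + 5 * d + 4) / v := by
  have hv0 : (0:ℝ) < v := by linarith
  have hxp : ∀ i, 0 < x i := by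
    intro i; obtain ⟨n, hn, he⟩ := hx i
    rw [he]; positivity
  have hxl : ∀ i, 1 / v ≤ x i := by
    intro i; obtain ⟨n, hn, he⟩ := hx i
    rw [he]
    gcongr
    exact_mod_cast hn
  have hU : 1 ≤ U d x := U_ge_one hxp
  have hU0 : (0:ℝ) < U d x := by linarith
  have hsum : (∑ i, Real.log (x i) ^ 2) ≤
      (d : ℝ) * ((Real.log v) ^ 2 + 4) + 4 * ((U d x) - 1) := by
    have hUe : ∑ i, (x i * (Real.log (x i) - 1) + 1) = U d x - 1 := by
      simp [U, Finset.sum_add_distrib]; ring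
    calc (∑ i, Real.log (x i) ^ 2)
        ≤ ∑ i : Fin d, ((Real.log v) ^ 2 + 4 + 4 * (x i * (Real.log (x i) - 1) + 1)) :=
          Finset.sum_le_sum fun i _ => logsq_bound hv (hxp i) (hxl i)
      _ = (d : ℝ) * ((Real.log v) ^ 2 + 4) + 4 * ((U d x) - 1) := by
          rw [Finset.sum_add_distrib, Finset.sum_const, Finset.card_univ, Fintype.card_fin,
            nsmul_eq_mul, ← Finset.mul_sum, hUe]
  have hnum : (d : ℝ) + ∑ i, Real.log (x i) ^ 2 ≤
      ((d : ℝ) * (Real.log v) ^ 2 + 5 * d + 4) * U d x := by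
    have hd : (0:ℝ) ≤ d := Nat.cast_nonneg d
    have hlv : (0:ℝ) ≤ (Real.log v) ^ 2 := sq_nonneg _
    nlinarith [mul_nonneg (add_nonneg (mul_nonneg hd hlv) (by linarith : (0:ℝ) ≤ 5 * d))
      (by linarith : (0:ℝ) ≤ U d x - 1)]
  calc ((d : ℝ) + ∑ i, Real.log (x i) ^ 2) / (v * U d x)
      ≤ (((d : ℝ) * (Real.log v) ^ 2 + 5 * d + 4) * U d x) / (v * U d x) := by
        gcongr
    _ = ((d : ℝ) * (Real.log v) ^ 2 + 5 * d + 4) / v := by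
        have h1 : U d x ≠ 0 := hU0.ne'
        have h2 : v ≠ 0 := hv0.ne'
        field_simp

lemma ratio_tendsto (d : ℕ) :
    Tendsto (fun v : ℝ => ((d : ℝ) * (Real.log v) ^ 2 + 5 * d + 4) / v) atTop (nhds 0) := by
  have h1 : Tendsto (fun v : ℝ => (Real.log v) ^ 2 / (1 * v + 0)) atTop (nhds 0) :=
    Real.tendsto_pow_log_div_mul_add_atTop 1 0 2 one_ne_zero
  simp only [one_mul, add_zero] at h1
  have h2 : Tendsto (fun v : ℝ => ((5:ℝ) * d + 4) / v) atTop (nhds 0) :=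
    tendsto_const_nhds.div_atTop tendsto_id
  have h3 := (h1.const_mul (d : ℝ)).add h2
  simp only [mul_zero, zero_add] at h3
  refine h3.congr' ?_
  filter_upwards [eventually_gt_atTop (0:ℝ)] with v hv
  field_simp
  ring

theorem stmt3 (d : ℕ) :
    (∀ ε > (0:ℝ), ∃ V : ℝ, ∀ v ≥ V, ∀ x : Fin d → ℝ,
      (∀ i, ∃ n : ℕ, 0 < n ∧ x i = (n : ℝ) / v) →
      ((d : ℝ) + ∑ i, Real.log (x i) ^ 2) / (v * U d x) ≤ ε) ∧
    (∀ ε > (0:ℝ), ∃ V : ℝ, ∀ v ≥ V, ∀ x : Fin d → ℝ,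
      (∀ i, ∃ n : ℕ, 0 < n ∧ x i = (n : ℝ) / v) →
      2 * (∑ i, |Real.log (x i)|) / (v * U d x) ≤ ε) := by
  have key : ∀ ε > (0:ℝ), ∃ V : ℝ, ∀ v ≥ V, ∀ x : Fin d → ℝ,
      (∀ i, ∃ n : ℕ, 0 < n ∧ x i = (n : ℝ) / v) →
      ((d : ℝ) + ∑ i, Real.log (x i) ^ 2) / (v * U d x) ≤ ε := by
    intro ε hε
    have h := (ratio_tendsto d).eventually (gt_mem_nhds hε)
    obtain ⟨V0, hV0⟩ := (h.and (eventually_ge_atTop (1:ℝ))).exists_forall_of_atTop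
    refine ⟨V0, fun v hv x hx => ?_⟩
    obtain ⟨hlt, hv1⟩ := hV0 v hv
    exact (main_bound hv1 hx).trans hlt.le
  refine ⟨key, fun ε hε => ?_⟩
  obtain ⟨V, hV⟩ := key ε hε
  refine ⟨max V 1, fun v hv x hx => ?_⟩
  have hv1 : (1:ℝ) ≤ v := le_trans (le_max_right _ _) hv
  have hxp : ∀ i, 0 < x i := by
    intro i; obtain ⟨n, hn, he⟩ := hx i
    rw [he]; positivity
  have hU : 1 ≤ U d x := U_ge_one hxp
  have hden : (0:ℝ) < v * U d x := by positivity
  have habs : 2 * (∑ i, |Real.log (x i)|) ≤ (d : ℝ) + ∑ i, Real.log (x i) ^ 2 := by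
    have h1 : ∀ i : Fin d, 2 * |Real.log (x i)| ≤ 1 + Real.log (x i) ^ 2 := by
      intro i
      nlinarith [sq_nonneg (|Real.log (x i)| - 1), sq_abs (Real.log (x i))]
    calc 2 * (∑ i, |Real.log (x i)|) = ∑ i, 2 * |Real.log (x i)| := by
          rw [Finset.mul_sum]
      _ ≤ ∑ i : Fin d, (1 + Real.log (x i) ^ 2) := Finset.sum_le_sum fun i _ => h1 i
      _ = (d : ℝ) + ∑ i, Real.log (x i) ^ 2 := by
          rw [Finset.sum_add_distrib, Finset.sum_const, Finset.card_univ, Fintype.card_fin,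
            nsmul_eq_mul, mul_one]
  calc 2 * (∑ i, |Real.log (x i)|) / (v * U d x)
      ≤ ((d : ℝ) + ∑ i, Real.log (x i) ^ 2) / (v * U d x) := by gcongr
    _ ≤ ε := hV v (le_trans (le_max_left _ _) hv) x hx


end
end

section
/- There exist a finite v⋆ and a finite constant C such that for every nonempty P ⊆ {1,…,d}, every reaction r ∈ R(P), every v ≥ v⋆, and every x such that v·x has strictly positive integer coordinates on P and zero coordinates off P, and v·x + c^r ∈ ℕ₀^d, one has |v · U(x) · log( U(x + v⁻¹ c^r) / U(x) ) − h_r^{(v)}(x)| ≤ C. -/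
open Real Filter Finset Set MeasureTheory
open scoped Classical

noncomputable section

/-! Put `f t = t (log t - 1)` and `A = v (U(x + c/v) - U(x))`. Coordinatewise, `v (f(x_i + c_i/v) - f(x_i))`
differs from `(∇U)_i c_i` by the Bregman divergence of `f` between the integers `n` and `n + c_i`
(at most `c_i²`) on `P`, and by exactly `-c_i` off `P`; so `A - h = O(1)`. As `|∇U| = O(log (vU))`,
`A = O(√(vU))`, hence `T = A / (vU)` is small once `v` is large, and
`vU log (1 + T) - A = vU (log (1 + T) - T) = O(vU T²) = O(A² / (vU)) = O(1)`. -/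

namespace Real

lemma neg_one_le_mul_log_sub_one {t : ℝ} (ht : 0 ≤ t) : -1 ≤ t * (log t - 1) := by
  rcases ht.eq_or_lt with rfl | ht
  · simp
  · have := mul_le_mul_of_nonneg_left (one_sub_inv_le_log_of_pos ht) ht.le
    rw [mul_sub, mul_inv_cancel₀ ht.ne'] at this
    linarith

lemma abs_bregman_mul_log_sub_one_le {a b : ℝ} (ha : 0 < a) (hb : 0 ≤ b) :
    |b * (log b - 1) - a * (log a - 1) - (b - a) * log a| ≤ (b - a) ^ 2 / a := by
  rcases hb.eq_or_lt with rfl | hb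
  · have h0 : (0 : ℝ) * (log 0 - 1) - a * (log a - 1) - (0 - a) * log a = a := by ring
    rw [h0, abs_of_pos ha, zero_sub, neg_sq, sq, mul_div_cancel_right₀ _ ha.ne']
  have hE : b * (log b - 1) - a * (log a - 1) - (b - a) * log a = b * log (b / a) - (b - a) := by
    rw [log_div hb.ne' ha.ne']; ring
  have hlo : b - a ≤ b * log (b / a) := by
    have := mul_le_mul_of_nonneg_left (one_sub_inv_le_log_of_pos (div_pos hb ha)) hb.le
    rwa [inv_div, mul_sub, mul_one, mul_div_cancel₀ _ hb.ne'] at this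
  have hup : b * log (b / a) ≤ b * (b / a - 1) :=
    mul_le_mul_of_nonneg_left (log_le_sub_one_of_pos (div_pos hb ha)) hb.le
  have hsq : b * (b / a - 1) - (b - a) = (b - a) ^ 2 / a := by field_simp
  rw [hE, abs_of_nonneg (by linarith)]
  linarith

lemma abs_log_one_add_sub_self_le {t : ℝ} (ht : |t| ≤ 1 / 2) : |log (1 + t) - t| ≤ 2 * t ^ 2 := by
  have h := abs_log_sub_add_sum_range_le (x := -t) (by rw [abs_neg]; linarith) 1
  rw [Finset.sum_range_one, abs_neg] at h
  calc |log (1 + t) - t| = |(-t) ^ (0 + 1) / ((0 : ℕ) + 1) + log (1 - -t)| := by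
        congr 1; push_cast; ring_nf
    _ ≤ |t| ^ 2 / (1 - |t|) := h
    _ ≤ |t| ^ 2 / (1 / 2) := by gcongr; linarith
    _ = 2 * t ^ 2 := by rw [sq_abs]; ring

lemma sq_add_mul_log_le {a b w : ℝ} (ha : 0 ≤ a) (hb : 0 ≤ b) (hw : 1 ≤ w) :
    (a + b * log w) ^ 2 ≤ (a + 2 * b) ^ 2 * w := by
  have hs : 1 ≤ √w := one_le_sqrt.mpr hw
  have hlog : log w ≤ 2 * √w := by
    have := log_le_sub_one_of_pos (by positivity : 0 < √w)
    rw [log_sqrt (by linarith)] at this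
    linarith
  have hle : a + b * log w ≤ (a + 2 * b) * √w := by
    nlinarith [mul_le_mul_of_nonneg_left hlog hb]
  calc (a + b * log w) ^ 2 ≤ ((a + 2 * b) * √w) ^ 2 := by
        gcongr
        have := log_nonneg hw
        positivity
    _ = (a + 2 * b) ^ 2 * w := by rw [mul_pow, sq_sqrt (by linarith)]

lemma abs_mul_log_one_add_div_sub_le {w A S : ℝ} (hw : 0 < w) (hA : A ^ 2 ≤ S ^ 2 * w)
    (hSw : 4 * S ^ 2 ≤ w) : |w * log (1 + A / w) - A| ≤ 2 * S ^ 2 := by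
  have hT2 : (A / w) ^ 2 ≤ S ^ 2 / w := by
    rw [div_pow, div_le_div_iff₀ (by positivity) hw]
    nlinarith
  have hT : |A / w| ≤ 1 / 2 := by
    apply abs_le_of_sq_le_sq _ (by norm_num)
    calc (A / w) ^ 2 ≤ S ^ 2 / w := hT2
      _ ≤ (1 / 2) ^ 2 := by rw [div_le_iff₀ hw]; linarith
  calc |w * log (1 + A / w) - A| = w * |log (1 + A / w) - A / w| := by
        rw [← abs_of_pos hw, ← abs_mul, abs_of_pos hw, mul_sub, mul_div_cancel₀ _ hw.ne']
    _ ≤ w * (2 * (A / w) ^ 2) := by gcongr; exact abs_log_one_add_sub_self_le hT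
    _ ≤ w * (2 * (S ^ 2 / w)) := by gcongr
    _ = 2 * S ^ 2 := by field_simp

lemma mul_div_mul_log_div_sub_one {v : ℝ} (hv : 0 < v) (a : ℝ) :
    v * (a / v * (log (a / v) - 1)) = a * (log a - 1) - a * log v := by
  rcases eq_or_ne a 0 with rfl | ha
  · simp
  · rw [log_div ha hv.ne']
    field_simp
    ring

end Real

lemma one_le_U {n : ℕ} {x : Fin n → ℝ} (hx : ∀ i, 0 ≤ x i) : 1 ≤ U n x := by
  have : ∑ _i : Fin n, (-1 : ℝ) ≤ ∑ i, x i * (log (x i) - 1) :=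
    Finset.sum_le_sum fun i _ => Real.neg_one_le_mul_log_sub_one (hx i)
  simp only [Finset.sum_const, Finset.card_univ, Fintype.card_fin, nsmul_eq_mul] at this
  unfold U
  linarith

lemma mul_log_sub_one_add_two_le_U {n : ℕ} {x : Fin n → ℝ} (hx : ∀ i, 0 ≤ x i) (j : Fin n) :
    x j * (log (x j) - 1) + 2 ≤ U n x := by
  have h := Finset.single_le_sum (f := fun i => x i * (log (x i) - 1) + 1)
    (fun i _ => by linarith [Real.neg_one_le_mul_log_sub_one (hx i)]) (Finset.mem_univ j)
  simp only [Finset.sum_add_distrib, Finset.sum_const, Finset.card_univ, Fintype.card_fin,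
    nsmul_eq_mul, mul_one] at h
  unfold U
  linarith

lemma log_le_log_U_add_two {n : ℕ} {x : Fin n → ℝ} (hx : ∀ i, 0 ≤ x i) (j : Fin n) :
    log (x j) ≤ log (U n x) + 2 := by
  have hU := mul_log_sub_one_add_two_le_U hx j
  have hlogU := log_nonneg (one_le_U hx)
  rcases (hx j).eq_or_lt with h0 | hpos
  · rw [← h0, log_zero]
    linarith
  rcases le_total (x j) (exp 2) with hsmall | hbig
  · linarith [log_le_log hpos hsmall, log_exp 2]
  · have h2 : 2 ≤ log (x j) := by
      rw [← log_exp 2]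
      exact log_le_log (exp_pos 2) hbig
    have hxU : x j ≤ U n x := by nlinarith
    linarith [log_le_log hpos hxU]

namespace CRN

variable {d m : ℕ} (N : CRN d m)

lemma exists_abs_cvec_le : ∃ B : ℝ, 0 ≤ B ∧ ∀ r i, |N.cvec r i| ≤ B :=
  ⟨∑ r, ∑ i, |N.cvec r i|, by positivity, fun r i =>
    (Finset.single_le_sum (f := fun i => |N.cvec r i|) (fun _ _ => abs_nonneg _)
      (Finset.mem_univ i)).trans
    (Finset.single_le_sum (f := fun r => ∑ i, |N.cvec r i|) (fun _ _ => by positivity)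
      (Finset.mem_univ r))⟩

/-- The coefficients of `∇_r^{(v)} U(x)`. -/
def gradU (P : Finset (Fin d)) (v : ℝ) (r : Fin m) (x : Fin d → ℝ) (i : Fin d) : ℝ :=
  if i ∈ P then log (x i) else if N.cout r i ≠ 0 then log (N.cvec r i / v) else 0

lemma hrv_eq_sum_gradU (P : Finset (Fin d)) (v : ℝ) (r : Fin m) (x : Fin d → ℝ) :
    N.hrv P v r x = ∑ i, N.gradU P v r x i * N.cvec r i :=
  rfl

variable {N} {P : Finset (Fin d)} {r : Fin m} {v B : ℝ} {x : Fin d → ℝ}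

lemma cvec_eq_cout_of_notMem (hr : r ∈ N.RP P) {i : Fin d} (hi : i ∉ P) :
    N.cvec r i = N.cout r i := by
  simp [cvec, hr i hi]

lemma nonneg_of_mem_lattice (hv : 0 < v) (hxP : ∀ i ∈ P, ∃ n : ℕ, 0 < n ∧ x i = n / v)
    (hx0 : ∀ i ∉ P, x i = 0) (i : Fin d) : 0 ≤ x i := by
  by_cases hi : i ∈ P
  · obtain ⟨n, -, hn⟩ := hxP i hi
    rw [hn]
    positivity
  · rw [hx0 i hi]

lemma abs_mul_sub_gradU_mul_cvec_le (hv : 0 < v) (hr : r ∈ N.RP P)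
    (hxP : ∀ i ∈ P, ∃ n : ℕ, 0 < n ∧ x i = n / v) (hx0 : ∀ i ∉ P, x i = 0)
    (hpos : ∀ i, 0 ≤ v * x i + N.cvec r i) (i : Fin d) :
    |v * ((x i + N.cvec r i / v) * (log (x i + N.cvec r i / v) - 1)
        - x i * (log (x i) - 1)) - N.gradU P v r x i * N.cvec r i|
      ≤ N.cvec r i ^ 2 + |N.cvec r i| := by
  set c := N.cvec r i
  by_cases hi : i ∈ P
  · obtain ⟨n, hn, hxn⟩ := hxP i hi
    have hn1 : (1 : ℝ) ≤ n := by exact_mod_cast hn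
    have hnc : 0 ≤ (n : ℝ) + c := by
      have := hpos i
      rwa [hxn, mul_div_cancel₀ _ hv.ne'] at this
    have hy : x i + c / v = (n + c) / v := by rw [hxn, add_div]
    have hE : v * ((x i + c / v) * (log (x i + c / v) - 1) - x i * (log (x i) - 1))
        - N.gradU P v r x i * c
        = (n + c) * (log (n + c) - 1) - n * (log n - 1) - (n + c - n) * log n := by
      rw [gradU, if_pos hi, mul_sub, hy, hxn, Real.mul_div_mul_log_div_sub_one hv,
        Real.mul_div_mul_log_div_sub_one hv, log_div (by positivity) hv.ne']
      ring
    rw [hE]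
    calc _ ≤ (n + c - n) ^ 2 / n := Real.abs_bregman_mul_log_sub_one_le (by positivity) hnc
      _ ≤ c ^ 2 := by rw [add_sub_cancel_left]; exact div_le_self (sq_nonneg c) hn1
      _ ≤ c ^ 2 + |c| := le_add_of_nonneg_right (abs_nonneg c)
  · have hc : c = N.cout r i := cvec_eq_cout_of_notMem hr hi
    have hE : v * ((x i + c / v) * (log (x i + c / v) - 1) - x i * (log (x i) - 1))
        - N.gradU P v r x i * c = -c := by
      rw [hx0 i hi, zero_add, zero_mul, sub_zero, Real.mul_div_mul_log_div_sub_one hv, gradU,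
        if_neg hi]
      split_ifs with hco
      · have hc0 : c ≠ 0 := by rw [hc]; exact_mod_cast hco
        rw [log_div hc0 hv.ne']
        ring
      · have hc0 : c = 0 := by rw [hc]; exact_mod_cast not_not.mp hco
        simp [hc0]
    rw [hE, abs_neg]
    exact le_add_of_nonneg_left (sq_nonneg c)

lemma abs_mul_U_sub_sub_hrv_le (hv : 0 < v) (hr : r ∈ N.RP P)
    (hxP : ∀ i ∈ P, ∃ n : ℕ, 0 < n ∧ x i = n / v) (hx0 : ∀ i ∉ P, x i = 0)
    (hpos : ∀ i, 0 ≤ v * x i + N.cvec r i) (hB : ∀ i, |N.cvec r i| ≤ B) :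
    |v * (U d (fun i => x i + N.cvec r i / v) - U d x) - N.hrv P v r x| ≤ d * (B ^ 2 + B) := by
  have hsum : v * (U d (fun i => x i + N.cvec r i / v) - U d x) - N.hrv P v r x
      = ∑ i, (v * ((x i + N.cvec r i / v) * (log (x i + N.cvec r i / v) - 1)
          - x i * (log (x i) - 1)) - N.gradU P v r x i * N.cvec r i) := by
    simp only [U, hrv_eq_sum_gradU, Finset.sum_sub_distrib, ← Finset.mul_sum]
    ring
  rw [hsum]
  calc _ ≤ ∑ i : Fin d, (B ^ 2 + B) := by
        refine (Finset.abs_sum_le_sum_abs _ _).trans (Finset.sum_le_sum fun i _ => ?_)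
        refine (abs_mul_sub_gradU_mul_cvec_le hv hr hxP hx0 hpos i).trans ?_
        have hBi := hB i
        have hsq : N.cvec r i ^ 2 ≤ B ^ 2 := sq_le_sq' (neg_le_of_abs_le hBi) (le_of_abs_le hBi)
        linarith
    _ = d * (B ^ 2 + B) := by simp; ring

lemma abs_gradU_le (hv : 1 ≤ v) (hr : r ∈ N.RP P)
    (hxP : ∀ i ∈ P, ∃ n : ℕ, 0 < n ∧ x i = n / v) (hx0 : ∀ i ∉ P, x i = 0)
    (hcv : ∀ i, N.cvec r i ≤ v) (i : Fin d) :
    |N.gradU P v r x i| ≤ log (v * U d x) + 2 := by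
  have hv0 : 0 < v := by linarith
  have hx := nonneg_of_mem_lattice hv0 hxP hx0
  have hU := one_le_U hx
  rw [log_mul hv0.ne' (by linarith)]
  have hlogv := log_nonneg hv
  have hlogU := log_nonneg hU
  rw [abs_le, gradU]
  split_ifs with hi hco
  · obtain ⟨n, hn, hxn⟩ := hxP i hi
    have hlogn : 0 ≤ log n := log_nonneg (by exact_mod_cast hn)
    have hlogx : log (x i) = log n - log v := by
      rw [hxn, log_div (by positivity) hv0.ne']
    constructor
    · linarith
    · linarith [log_le_log_U_add_two hx i]
  · have hc : (1 : ℝ) ≤ N.cvec r i := by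
      rw [cvec_eq_cout_of_notMem hr hi]
      exact_mod_cast Nat.one_le_iff_ne_zero.mpr hco
    rw [log_div (by linarith) hv0.ne']
    have := log_le_log (by linarith) (hcv i)
    constructor
    · linarith [log_nonneg hc]
    · linarith
  · constructor <;> linarith

lemma abs_hrv_le (hv : 1 ≤ v) (hr : r ∈ N.RP P)
    (hxP : ∀ i ∈ P, ∃ n : ℕ, 0 < n ∧ x i = n / v) (hx0 : ∀ i ∉ P, x i = 0)
    (hB : ∀ i, |N.cvec r i| ≤ B) (hBv : B ≤ v) :
    |N.hrv P v r x| ≤ d * B * (log (v * U d x) + 2) := by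
  have hL : 0 ≤ log (v * U d x) + 2 := by
    have := one_le_U (nonneg_of_mem_lattice (by linarith) hxP hx0)
    have := log_nonneg (one_le_mul_of_one_le_of_one_le hv this)
    linarith
  rw [hrv_eq_sum_gradU]
  calc _ ≤ ∑ _i : Fin d, (log (v * U d x) + 2) * B := by
        refine (Finset.abs_sum_le_sum_abs _ _).trans (Finset.sum_le_sum fun i _ => ?_)
        rw [abs_mul]
        exact mul_le_mul (abs_gradU_le hv hr hxP hx0 (fun j => (le_of_abs_le (hB j)).trans hBv) i)
          (hB i) (abs_nonneg _) hL
    _ = d * B * (log (v * U d x) + 2) := by simp; ring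

lemma sq_mul_U_sub_le (hv : 1 ≤ v) (hr : r ∈ N.RP P)
    (hxP : ∀ i ∈ P, ∃ n : ℕ, 0 < n ∧ x i = n / v) (hx0 : ∀ i ∉ P, x i = 0)
    (hpos : ∀ i, 0 ≤ v * x i + N.cvec r i) (hB0 : 0 ≤ B) (hB : ∀ i, |N.cvec r i| ≤ B)
    (hBv : B ≤ v) :
    (v * (U d (fun i => x i + N.cvec r i / v) - U d x)) ^ 2
      ≤ (d * (B ^ 2 + B) + 4 * d * B) ^ 2 * (v * U d x) := by
  set A := v * (U d (fun i => x i + N.cvec r i / v) - U d x)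
  have hAh := abs_mul_U_sub_sub_hrv_le (by linarith) hr hxP hx0 hpos hB
  have hh := abs_hrv_le hv hr hxP hx0 hB hBv
  have hA : |A| ≤ (d * (B ^ 2 + B) + 2 * d * B) + d * B * log (v * U d x) := by
    have := abs_add_le (A - N.hrv P v r x) (N.hrv P v r x)
    rw [sub_add_cancel] at this
    linarith
  have hw : 1 ≤ v * U d x :=
    one_le_mul_of_one_le_of_one_le hv (one_le_U (nonneg_of_mem_lattice (by linarith) hxP hx0))
  calc A ^ 2 = |A| ^ 2 := (sq_abs A).symm
    _ ≤ ((d * (B ^ 2 + B) + 2 * d * B) + d * B * log (v * U d x)) ^ 2 :=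
        pow_le_pow_left₀ (abs_nonneg A) hA 2
    _ ≤ ((d * (B ^ 2 + B) + 2 * d * B) + 2 * (d * B)) ^ 2 * (v * U d x) :=
        Real.sq_add_mul_log_le (by positivity) (by positivity) hw
    _ = (d * (B ^ 2 + B) + 4 * d * B) ^ 2 * (v * U d x) := by ring

end CRN

theorem stmt4 {d m : ℕ} (N : CRN d m) :
    ∃ (vstar C : ℝ), ∀ P : Finset (Fin d), P.Nonempty → ∀ r ∈ N.RP P, ∀ v ≥ vstar,
      ∀ x : Fin d → ℝ, (∀ i ∈ P, ∃ n : ℕ, 0 < n ∧ x i = (n : ℝ) / v) →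
        (∀ i ∉ P, x i = 0) → (∀ i, 0 ≤ v * x i + N.cvec r i) →
        |v * U d x * Real.log (U d (fun i => x i + N.cvec r i / v) / U d x) - N.hrv P v r x|
          ≤ C := by
  obtain ⟨B, hB0, hB⟩ := N.exists_abs_cvec_le
  set K : ℝ := d * (B ^ 2 + B)
  set S : ℝ := K + 4 * d * B
  refine ⟨4 * S ^ 2 + B + 1, 2 * S ^ 2 + K, fun P _ r hr v hv x hxP hx0 hpos => ?_⟩
  have hS := sq_nonneg S
  have hv1 : 1 ≤ v := by linarith
  have hU := one_le_U (CRN.nonneg_of_mem_lattice (by linarith) hxP hx0)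
  have hw : 0 < v * U d x := by positivity
  set A := v * (U d (fun i => x i + N.cvec r i / v) - U d x)
  have hratio : U d (fun i => x i + N.cvec r i / v) / U d x = 1 + A / (v * U d x) := by
    rw [mul_div_mul_left _ _ (by positivity), one_add_div (by positivity), add_sub_cancel]
  rw [hratio, show v * U d x * log (1 + A / (v * U d x)) - N.hrv P v r x
    = (v * U d x * log (1 + A / (v * U d x)) - A) + (A - N.hrv P v r x) by ring]
  refine (abs_add_le _ _).trans (add_le_add ?_ ?_)
  · refine Real.abs_mul_log_one_add_div_sub_le hw ?_ (by nlinarith)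
    exact CRN.sq_mul_U_sub_le hv1 hr hxP hx0 hpos hB0 (hB r) (by linarith)
  · exact CRN.abs_mul_U_sub_sub_hrv_le (by linarith) hr hxP hx0 hpos (hB r)
end
end

section
/- For each reaction r set δ_r := ∏_{i=1}^d ξ((c_in^r)_i), where ξ(n) := n!/nⁿ for n ≥ 1 and ξ(0) := 1. Then for every v ≥ 1 and every x ∈ (v⁻¹ℕ₀)^d one has Λ_r^{(v)}(x) ≤ λ_r(x); moreover, on the set of x with v·x_i ≥ (c_in^r)_i for all i, the ratio Λ_r^{(v)}(x)/λ_r(x) is nondecreasing in each coordinate v·x_i, equals δ_r when v·x = c_in^r, and hence satisfies Λ_r^{(v)}(x) ≥ δ_r · λ_r(x) there. -/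
open Real Filter Finset Set MeasureTheory
open scoped Classical

noncomputable section

lemma aux_prod_nonneg (n c : ℕ) : 0 ≤ ∏ l ∈ Finset.range c, ((n : ℝ) - l) := by
  rcases lt_or_ge n c with h | h
  · rw [Finset.prod_eq_zero (Finset.mem_range.2 h) (by simp)]
  · apply Finset.prod_nonneg; intro l hl
    have h1 : l < c := Finset.mem_range.1 hl
    have h2 : (l : ℝ) ≤ n := by exact_mod_cast le_of_lt (lt_of_lt_of_le h1 h)
    linarith

lemma aux_prod_le (n c : ℕ) : ∏ l ∈ Finset.range c, ((n : ℝ) - l) ≤ (n : ℝ) ^ c := by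
  rcases lt_or_ge n c with h | h
  · rw [Finset.prod_eq_zero (Finset.mem_range.2 h) (by simp)]; positivity
  · calc ∏ l ∈ Finset.range c, ((n : ℝ) - l) ≤ ∏ _l ∈ Finset.range c, (n : ℝ) := by
          apply Finset.prod_le_prod
          · intro l hl
            have h1 : l < c := Finset.mem_range.1 hl
            have h2 : (l : ℝ) ≤ n := by exact_mod_cast le_of_lt (lt_of_lt_of_le h1 h)
            linarith
          · intro l hl
            have h2 : (0:ℝ) ≤ l := Nat.cast_nonneg l
            linarith
      _ = (n : ℝ) ^ c := by rw [Finset.prod_const, Finset.card_range]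

lemma aux_ratio_nonneg (c : ℕ) (a : ℝ) (hca : (c : ℝ) ≤ a) :
    0 ≤ (∏ l ∈ Finset.range c, (a - l)) / a ^ c := by
  have ha : 0 ≤ a := le_trans (Nat.cast_nonneg c) hca
  apply div_nonneg
  · apply Finset.prod_nonneg; intro l hl
    have h1 : (l : ℝ) < c := by exact_mod_cast Finset.mem_range.1 hl
    linarith
  · positivity

lemma aux_ratio_mono (c : ℕ) (a b : ℝ) (hca : (c : ℝ) ≤ a) (hab : a ≤ b) :
    (∏ l ∈ Finset.range c, (a - l)) / a ^ c ≤ (∏ l ∈ Finset.range c, (b - l)) / b ^ c := by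
  rcases Nat.eq_zero_or_pos c with hc | hc
  · subst hc; simp
  · have hc1 : (1 : ℝ) ≤ (c : ℝ) := by exact_mod_cast hc
    have ha : 0 < a := lt_of_lt_of_le (by linarith) hca
    have hb : 0 < b := lt_of_lt_of_le ha hab
    have key : ∀ t : ℝ, 0 < t → ∏ l ∈ Finset.range c, ((t - l) / t)
        = (∏ l ∈ Finset.range c, (t - l)) / t ^ c := by
      intro t ht
      rw [Finset.prod_div_distrib, Finset.prod_const, Finset.card_range]
    rw [← key a ha, ← key b hb]
    apply Finset.prod_le_prod
    · intro l hl
      have hlc : (l : ℝ) < c := by exact_mod_cast Finset.mem_range.1 hl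
      have h1 : (0:ℝ) ≤ a - l := by linarith
      positivity
    · intro l hl
      have hlc : (l : ℝ) < c := by exact_mod_cast Finset.mem_range.1 hl
      have hl0 : (0:ℝ) ≤ l := Nat.cast_nonneg l
      rw [div_le_div_iff₀ ha hb]
      nlinarith

lemma aux_prod_fact (n : ℕ) : ∏ l ∈ Finset.range n, ((n : ℝ) - l) = n.factorial := by
  induction n with
  | zero => simp
  | succ n ih =>
    rw [Finset.prod_range_succ']
    have h1 : ∏ l ∈ Finset.range n, (((n : ℕ) + 1 : ℝ) - ((l : ℕ) + 1 : ℝ))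
        = ∏ l ∈ Finset.range n, ((n : ℝ) - l) :=
      Finset.prod_congr rfl (fun l _ => by push_cast; ring)
    push_cast
    rw [h1, ih, Nat.factorial_succ]
    push_cast
    ring

namespace CRN

lemma aux_lam_pos {d m : ℕ} (N : CRN d m) (r : Fin m) (v : ℝ) (hv : 0 < v)
    (x : Fin d → ℝ) (hx : ∀ i, (N.cin r i : ℝ) ≤ v * x i) : 0 < N.lam r x := by
  unfold CRN.lam
  apply mul_pos (N.k_pos r)
  apply Finset.prod_pos
  intro i _
  rcases Nat.eq_zero_or_pos (N.cin r i) with h | h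
  · simp [h]
  · have h1 : (1 : ℝ) ≤ (N.cin r i : ℝ) := by exact_mod_cast h
    have hxi : 0 < x i := by nlinarith [hx i]
    positivity

lemma aux_jump_eq {d m : ℕ} (N : CRN d m) (r : Fin m) (v : ℝ) (hv : 0 < v)
    (x : Fin d → ℝ) (hx : ∀ i, (N.cin r i : ℝ) ≤ v * x i) :
    N.jump v r x = N.lam r x *
      ∏ i, (∏ l ∈ Finset.range (N.cin r i), (v * x i - l)) / (v * x i) ^ (N.cin r i) := by
  have hper : ∀ i, x i ^ (N.cin r i) *
      ((∏ l ∈ Finset.range (N.cin r i), (v * x i - l)) / (v * x i) ^ (N.cin r i))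
      = (∏ l ∈ Finset.range (N.cin r i), (v * x i - l)) / v ^ (N.cin r i) := by
    intro i
    rcases Nat.eq_zero_or_pos (N.cin r i) with h | h
    · simp [h]
    · have h1 : (1 : ℝ) ≤ (N.cin r i : ℝ) := by exact_mod_cast h
      have hxi : 0 < x i := by nlinarith [hx i]
      rw [mul_pow]
      field_simp
  unfold CRN.jump CRN.lam
  rw [mul_assoc, ← Finset.prod_mul_distrib, Finset.prod_congr rfl (fun i _ => hper i),
    Finset.prod_div_distrib, Finset.prod_pow_eq_pow_sum, div_mul_eq_mul_div, mul_div_assoc]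

/-- The ratio `Λ/λ` is monotone on the region `v x ≥ c_in`. -/
lemma aux_mono {d m : ℕ} (N : CRN d m) (r : Fin m) (v : ℝ) (hv : 0 < v)
    (x y : Fin d → ℝ) (hcx : ∀ i, (N.cin r i : ℝ) ≤ v * x i) (hxy : ∀ i, x i ≤ y i) :
    N.jump v r x / N.lam r x ≤ N.jump v r y / N.lam r y := by
  have hcy : ∀ i, (N.cin r i : ℝ) ≤ v * y i := fun i =>
    le_trans (hcx i) (mul_le_mul_of_nonneg_left (hxy i) hv.le)
  have hlx := N.aux_lam_pos r v hv x hcx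
  have hly := N.aux_lam_pos r v hv y hcy
  rw [N.aux_jump_eq r v hv x hcx, N.aux_jump_eq r v hv y hcy,
    mul_div_cancel_left₀ _ (ne_of_gt hlx), mul_div_cancel_left₀ _ (ne_of_gt hly)]
  apply Finset.prod_le_prod
  · intro i _
    exact aux_ratio_nonneg _ _ (hcx i)
  · intro i _
    exact aux_ratio_mono _ _ _ (hcx i) (mul_le_mul_of_nonneg_left (hxy i) hv.le)

/-- At `v x = c_in` the ratio equals `δ_r`. -/
lemma aux_eq {d m : ℕ} (N : CRN d m) (r : Fin m) (v : ℝ) (hv : 0 < v)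
    (x : Fin d → ℝ) (hvx : ∀ i, v * x i = (N.cin r i : ℝ)) :
    N.jump v r x / N.lam r x
      = ∏ i, (Nat.factorial (N.cin r i) : ℝ) / (N.cin r i : ℝ) ^ (N.cin r i) := by
  have hcx : ∀ i, (N.cin r i : ℝ) ≤ v * x i := fun i => (hvx i).ge
  have hlx := N.aux_lam_pos r v hv x hcx
  rw [N.aux_jump_eq r v hv x hcx, mul_div_cancel_left₀ _ (ne_of_gt hlx)]
  apply Finset.prod_congr rfl
  intro i _
  rw [hvx i, aux_prod_fact]

end CRN

theorem stmt5 {d m : ℕ} (N : CRN d m) (r : Fin m) :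
    let ξ : ℕ → ℝ := fun n => (Nat.factorial n : ℝ) / (n : ℝ) ^ n
    let δr : ℝ := ∏ i, ξ (N.cin r i)
    (∀ v : ℝ, 1 ≤ v → ∀ x : Fin d → ℝ, (∀ i, ∃ n : ℕ, x i = (n : ℝ) / v) →
      N.jump v r x ≤ N.lam r x) ∧
    (∀ v : ℝ, 1 ≤ v → ∀ x y : Fin d → ℝ,
      (∀ i, ∃ n : ℕ, x i = (n : ℝ) / v) → (∀ i, ∃ n : ℕ, y i = (n : ℝ) / v) →
      (∀ i, (N.cin r i : ℝ) ≤ v * x i) → (∀ i, x i ≤ y i) →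
      N.jump v r x / N.lam r x ≤ N.jump v r y / N.lam r y) ∧
    (∀ v : ℝ, 1 ≤ v → ∀ x : Fin d → ℝ, (∀ i, v * x i = (N.cin r i : ℝ)) →
      N.jump v r x / N.lam r x = δr) ∧
    (∀ v : ℝ, 1 ≤ v → ∀ x : Fin d → ℝ, (∀ i, ∃ n : ℕ, x i = (n : ℝ) / v) →
      (∀ i, (N.cin r i : ℝ) ≤ v * x i) →
      δr * N.lam r x ≤ N.jump v r x) := by
  intro ξ δr
  have hδ : δr = ∏ i, (Nat.factorial (N.cin r i) : ℝ) / (N.cin r i : ℝ) ^ (N.cin r i) := rfl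
  refine ⟨?_, ?_, ?_, ?_⟩
  · -- Part 1: jump ≤ lam
    intro v hv x hx
    have hv0 : (0:ℝ) < v := lt_of_lt_of_le one_pos hv
    choose n hn using hx
    have hvx : ∀ i, v * x i = (n i : ℝ) := fun i => by rw [hn i]; field_simp
    unfold CRN.jump CRN.lam
    have hc : ∀ (i : Fin d) (l : ℕ), v * ((n i : ℝ) / v) - l = (n i : ℝ) - l := by
      intro i l; field_simp
    simp only [hn, div_pow, hc]
    rw [Finset.prod_div_distrib, Finset.prod_pow_eq_pow_sum, div_mul_eq_mul_div, mul_div_assoc]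
    have hA : ∏ i, ∏ l ∈ Finset.range (N.cin r i), ((n i : ℝ) - l)
        ≤ ∏ i, (n i : ℝ) ^ (N.cin r i) :=
      Finset.prod_le_prod (fun i _ => aux_prod_nonneg _ _) (fun i _ => aux_prod_le _ _)
    apply mul_le_mul_of_nonneg_left _ (N.k_pos r).le
    gcongr
  · -- Part 2: monotonicity
    intro v hv x y _ _ hcx hxy
    exact N.aux_mono r v (lt_of_lt_of_le one_pos hv) x y hcx hxy
  · -- Part 3: equality at v x = c_in
    intro v hv x hvx
    rw [hδ]
    exact N.aux_eq r v (lt_of_lt_of_le one_pos hv) x hvx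
  · -- Part 4: lower bound
    intro v hv x hx hcx
    have hv0 : (0:ℝ) < v := lt_of_lt_of_le one_pos hv
    set x0 : Fin d → ℝ := fun i => (N.cin r i : ℝ) / v with hx0def
    have hvx0 : ∀ i, v * x0 i = (N.cin r i : ℝ) := fun i => by
      simp only [hx0def]; field_simp
    have hcx0 : ∀ i, (N.cin r i : ℝ) ≤ v * x0 i := fun i => (hvx0 i).ge
    have hx0x : ∀ i, x0 i ≤ x i := fun i => by
      simp only [hx0def]
      rw [div_le_iff₀ hv0]
      have := hcx i
      linarith [hcx i]
    have h2 := N.aux_mono r v hv0 x0 x hcx0 hx0x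
    have h3 := N.aux_eq r v hv0 x0 hvx0
    have hlx := N.aux_lam_pos r v hv0 x hcx
    have hδ2 : δr ≤ N.jump v r x / N.lam r x := by
      rw [hδ, ← h3]; exact h2
    exact (le_div_iff₀ hlx).1 hδ2

end
end

section
/- Let the chemical reaction network be strongly endotactic, let P ⊆ {1,…,d} be nonempty with R(P) ≠ ∅, and let w̄ = (w̄^{(1)},…,w̄^{(ℓ′)}) be an ordered orthonormal family of unit vectors supported on P. If a reaction r ∈ R(P) satisfies supp(c_out^r) ⊆ P, ⟨w̄^{(k)}, π_P c^r⟩ = 0 for all k < ℓ′, and ⟨w̄^{(ℓ′)}, π_P c^r⟩ > 0, then r ∉ super_{ℓ′}. -/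
open Real Filter Finset Set MeasureTheory
open scoped Classical

noncomputable section

/-!
Lexicographic maximality over a finite set is realised by a single linear functional: if `r`
survives the successive `w̄⁽¹⁾, …, w̄⁽ℓ'⁾`-maximisations within `R(P)`, then for suitable weights
`δ₁, …, δ_ℓ' > 0`, added one at a time and each small enough not to spoil the strict inequalities
already won, `r` is maximal within `R(P)` for `w = ∑ δ_k w̄⁽ᵏ⁾`. Subtracting a large multiple of
the indicator of the complement of `P` makes `r` maximal among all reactions without changing
`⟨w, c^r⟩ = δ_ℓ' ⟨w̄⁽ℓ'⁾, c^r⟩ > 0`, contradicting strong endotacticity.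
-/

open Matrix Topology

theorem Finset.exists_pos_forall_add_mul_pos {ι : Type*} (s : Finset ι) {A B : ι → ℝ}
    (hA : ∀ i ∈ s, 0 < A i) : ∃ ε > 0, ∀ i ∈ s, 0 < A i + ε * B i := by
  have hsmall : ∀ᶠ ε in 𝓝[>] (0 : ℝ), ∀ i ∈ s, 0 < A i + ε * B i := by
    refine (Filter.eventually_all_finset s).2 fun i hi => ?_
    have hlim : Tendsto (fun ε : ℝ => A i + ε * B i) (𝓝[>] 0) (𝓝 (A i + 0 * B i)) :=
      (tendsto_nhdsWithin_of_tendsto_nhds (by fun_prop : Continuous _).continuousAt)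
    simp only [zero_mul, add_zero] at hlim
    exact hlim.eventually (lt_mem_nhds (hA i hi))
  obtain ⟨ε, hε, hpos⟩ := (hsmall.and self_mem_nhdsWithin).exists
  exact ⟨ε, hpos, hε⟩

theorem dot_eq_dotProduct {n : ℕ} (a b : Fin n → ℝ) : dot a b = a ⬝ᵥ b := rfl

namespace CRN

variable {d m : ℕ} (N : CRN d m)

def input (r : Fin m) : Fin d → ℝ := fun i => N.cin r i

theorem sum_mul_cin_sub (w : Fin d → ℝ) (r r' : Fin m) :
    ∑ i, w i * ((N.cin r i : ℝ) - N.cin r' i) = w ⬝ᵥ N.input r - w ⬝ᵥ N.input r' :=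
  dotProduct_sub w (N.input r) (N.input r')

theorem cvec_eq_zero_of_notMem {P : Finset (Fin d)} {r : Fin m} (hr : r ∈ N.RP P)
    (hout : N.OutIn P r) {i : Fin d} (hi : i ∉ P) : N.cvec r i = 0 := by
  simp [cvec, hr i hi, hout i hi]

theorem exists_mem_Rw_of_mem_RPw {P : Finset (Fin d)} {w : Fin d → ℝ} {r : Fin m}
    (hr : r ∈ N.RPw P w) :
    ∃ u : Fin d → ℝ, r ∈ N.Rw u ∧ ∀ x : Fin d → ℝ, (∀ i ∉ P, x i = 0) → u ⬝ᵥ x = w ⬝ᵥ x := by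
  set outside : Fin d → ℝ := fun i => if i ∈ P then 0 else 1
  set M := ∑ r', |w ⬝ᵥ N.input r - w ⬝ᵥ N.input r'|
  have houtside : ∀ x : Fin d → ℝ, (∀ i ∉ P, x i = 0) → outside ⬝ᵥ x = 0 := fun x hx =>
    Finset.sum_eq_zero fun i _ => by by_cases hi : i ∈ P <;> simp [outside, hi, hx]
  refine ⟨w - M • outside, fun r' => ?_, fun x hx => by
    rw [sub_dotProduct, smul_dotProduct, houtside x hx, smul_zero, sub_zero]⟩
  have hrout : outside ⬝ᵥ N.input r = 0 := houtside _ fun i hi => by simp [input, hr.1 i hi]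
  have hr'out : 0 ≤ outside ⬝ᵥ N.input r' :=
    Finset.sum_nonneg fun i _ => by by_cases hi : i ∈ P <;> simp [outside, input, hi]
  have hM : -(w ⬝ᵥ N.input r - w ⬝ᵥ N.input r') ≤ M :=
    (neg_le_abs _).trans (Finset.single_le_sum (fun r'' _ => abs_nonneg
      (w ⬝ᵥ N.input r - w ⬝ᵥ N.input r'')) (Finset.mem_univ r'))
  have hM0 : 0 ≤ M := Finset.sum_nonneg fun _ _ => abs_nonneg _
  rw [sum_mul_cin_sub, sub_dotProduct, sub_dotProduct, smul_dotProduct, smul_dotProduct,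
    hrout, smul_eq_mul, smul_eq_mul]
  by_cases hr' : r' ∈ N.RP P
  · have := hr.2 r' hr'
    rw [sum_mul_cin_sub] at this
    nlinarith
  · obtain ⟨i, hi, hcin⟩ : ∃ i ∉ P, N.cin r' i ≠ 0 := by simpa [RP] using hr'
    have hone : 1 ≤ outside ⬝ᵥ N.input r' := by
      refine le_trans ?_ (Finset.single_le_sum (f := fun i => outside i * N.input r' i)
        (fun i _ => by by_cases hi : i ∈ P <;> simp [outside, input, hi]) (Finset.mem_univ i))
      simpa [outside, input, hi, Nat.one_le_iff_ne_zero] using hcin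
    nlinarith

variable {P : Finset (Fin d)} {L : ℕ} {wbar : Fin L → Fin d → ℝ}

theorem mem_superN_succ {k : ℕ} (hk : k < L) {r : Fin m} :
    r ∈ N.superN P wbar (k + 1) ↔ r ∈ N.superN P wbar k ∧
      ∀ r' ∈ N.superN P wbar k, wbar ⟨k, hk⟩ ⬝ᵥ N.input r' ≤ wbar ⟨k, hk⟩ ⬝ᵥ N.input r := by
  simp only [superN, dif_pos hk, Set.mem_ofPred_eq, sum_mul_cin_sub, sub_nonneg]

theorem exists_weights_of_mem_superN {k : ℕ} (hk : k ≤ L) {r : Fin m}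
    (hr : r ∈ N.superN P wbar k) :
    ∃ δ : Fin L → ℝ, 0 ≤ δ ∧ (∀ j : Fin L, (j : ℕ) < k → 0 < δ j) ∧ ∀ r' ∈ N.RP P,
      (r' ∈ N.superN P wbar k ∧
          (∑ j, δ j • wbar j) ⬝ᵥ N.input r' = (∑ j, δ j • wbar j) ⬝ᵥ N.input r) ∨
        (∑ j, δ j • wbar j) ⬝ᵥ N.input r' < (∑ j, δ j • wbar j) ⬝ᵥ N.input r := by
  induction k with
  | zero => exact ⟨0, le_rfl, fun j hj => absurd hj j.val.not_lt_zero,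
      fun r' hr' => .inl ⟨hr', by simp⟩⟩
  | succ k ih =>
    have hkL : k < L := hk
    obtain ⟨hrk, hrmax⟩ := (N.mem_superN_succ hkL).1 hr
    obtain ⟨δ, hδ0, hδpos, hcases⟩ := ih hkL.le hrk
    set w := ∑ j, δ j • wbar j
    set v := wbar ⟨k, hkL⟩
    obtain ⟨ε, hε, hεsmall⟩ := Finset.exists_pos_forall_add_mul_pos
      (Finset.univ.filter fun r' => w ⬝ᵥ N.input r' < w ⬝ᵥ N.input r)
      (A := fun r' => w ⬝ᵥ N.input r - w ⬝ᵥ N.input r')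
      (B := fun r' => v ⬝ᵥ N.input r - v ⬝ᵥ N.input r') (by simp)
    have hcombo : ∑ j, (δ + Pi.single ⟨k, hkL⟩ ε : Fin L → ℝ) j • wbar j = w + ε • v := by
      simp [w, v, add_smul, Finset.sum_add_distrib, Pi.single_apply, ite_smul]
    have hsingle : (0 : Fin L → ℝ) ≤ Pi.single ⟨k, hkL⟩ ε := Pi.single_nonneg.2 hε.le
    refine ⟨δ + Pi.single ⟨k, hkL⟩ ε, add_nonneg hδ0 hsingle, fun j hj => ?_, fun r' hr' => ?_⟩
    · rcases (Nat.lt_succ_iff.1 hj).lt_or_eq with hjk | rfl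
      · exact add_pos_of_pos_of_nonneg (hδpos j hjk) (hsingle j)
      · simpa using add_pos_of_nonneg_of_pos (hδ0 j) hε
    rw [hcombo, add_dotProduct, add_dotProduct, smul_dotProduct, smul_dotProduct, smul_eq_mul,
      smul_eq_mul]
    rcases hcases r' hr' with ⟨hr'k, hw⟩ | hw
    · rcases (hrmax r' hr'k).eq_or_lt with hv | hv
      · exact .inl ⟨(N.mem_superN_succ hkL).2 ⟨hr'k, fun r'' hr'' => hv ▸ hrmax r'' hr''⟩,
          by rw [hw, hv]⟩
      · exact .inr (by nlinarith)
    · have := hεsmall r' (by simpa using hw)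
      exact .inr (by nlinarith)

end CRN

open CRN in
theorem stmt10 {d m : ℕ} (ℓ' : ℕ) (hl : 0 < ℓ') (N : CRN d m)
    (hend : N.StronglyEndotactic)
    (P : Finset (Fin d))
    (wbar : Fin ℓ' → Fin d → ℝ)
    (r : Fin m) (hr : r ∈ N.RP P) (hout : N.OutIn P r)
    (hzero : ∀ k : Fin ℓ', (k : ℕ) < ℓ' - 1 → dot (wbar k) (N.cvec r) = 0)
    (hpos : 0 < dot (wbar ⟨ℓ' - 1, by omega⟩) (N.cvec r)) :
    r ∉ N.superN P wbar ℓ' := by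
  intro hmem
  obtain ⟨δ, -, hδpos, hmax⟩ := N.exists_weights_of_mem_superN le_rfl hmem
  set w := ∑ j, δ j • wbar j
  have hRPw : r ∈ N.RPw P w := ⟨hr, fun r' hr' => by
    rw [sum_mul_cin_sub, sub_nonneg]
    exact (hmax r' hr').elim (fun h => h.2.le) le_of_lt⟩
  obtain ⟨u, hRw, hu⟩ := N.exists_mem_Rw_of_mem_RPw hRPw
  have hwc : 0 < w ⬝ᵥ N.cvec r := by
    simp only [dot_eq_dotProduct] at hzero hpos
    rw [sum_dotProduct, Finset.sum_eq_single ⟨ℓ' - 1, by omega⟩]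
    · exact smul_dotProduct (δ _) (wbar _) _ ▸ mul_pos (hδpos _ (by simp; omega)) hpos
    · intro j _ hj
      have hjlt : (j : ℕ) < ℓ' - 1 := by
        have := j.isLt; have : (j : ℕ) ≠ ℓ' - 1 := fun h => hj (Fin.ext h); omega
      rw [smul_dotProduct, hzero j hjlt, smul_zero]
    · simp
  have huc := hu _ fun i hi => N.cvec_eq_zero_of_notMem hr hout hi
  have hne : u ≠ 0 := by rintro rfl; simp at huc; linarith
  have hendo : u ⬝ᵥ N.cvec r ≤ 0 := (hend u hne).2 r hRw
  linarith

end
end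

section
/- Let the chemical reaction network be strongly endotactic, let P ⊆ {1,…,d} be nonempty with R(P) ≠ ∅, and let w̄ = (w̄^{(1)},…,w̄^{(ℓ′)}) be an ordered orthonormal family of unit vectors supported on P. Then there exists a reaction r′ ∈ super_{ℓ′} such that either supp(c_out^{r′}) ⊄ P, or the finite sequence k ↦ ⟨w̄^{(k)}, π_P c^{r′}⟩, k = 1,…,ℓ′, is not identically zero and its first nonzero term is negative. -/
open Real Filter Finset Set MeasureTheory
open scoped Classical

noncomputable section

/-!
Perturb the frame into the single direction `w(ε) = u + ε w̄⁽¹⁾ + ⋯ + ε^ℓ' w̄^(ℓ')` with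
`u = -𝟙_{Pᶜ}`; pairing with `w̄⁽¹⁾` shows `w(ε) ≠ 0`. Strong endotacticity gives a
`w(ε)`-maximal reaction `r` with `⟨w(ε), c^r⟩ < 0`, and since there are finitely many reactions,
one `r` works for arbitrarily small `ε`. As `ε → 0⁺` the sign of a polynomial in `ε` is that of
its first nonzero coefficient, so `r` is lexicographically maximal for `(u, w̄⁽¹⁾, …, w̄^(ℓ'))`:
maximality for `u` puts `r` in `R(P)` (as `R(P) ≠ ∅`), the remaining coordinates put it in
`super_ℓ'`, and `⟨w(ε), c^r⟩ < 0` makes the first nonzero `⟨w̄^(k), c^r⟩` negative unless some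
product of `r` lies outside `P`.
-/

open Topology

section LexSign

variable {L : ℕ} (a : Fin L → ℝ) {k₀ : Fin L}

theorem sum_pow_mul_eq_pow_mul_sum (ha : ∀ j < k₀, a j = 0) (ε : ℝ) :
    ∑ k : Fin L, ε ^ (k : ℕ) * a k = ε ^ (k₀ : ℕ) * ∑ k : Fin L, ε ^ ((k : ℕ) - k₀) * a k := by
  rw [Finset.mul_sum]
  refine Finset.sum_congr rfl fun k _ => ?_
  rcases lt_or_ge k k₀ with hk | hk
  · simp [ha k hk]
  · rw [← mul_assoc, ← pow_add, Nat.add_sub_cancel' hk]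

theorem nonneg_of_frequently_nonneg_sum_pow_mul (ha : ∀ j < k₀, a j = 0)
    (h : ∃ᶠ ε in 𝓝[>] 0, 0 ≤ ∑ k : Fin L, ε ^ (k : ℕ) * a k) : 0 ≤ a k₀ := by
  have hq : Continuous fun ε : ℝ => ∑ k : Fin L, ε ^ ((k : ℕ) - k₀) * a k := by fun_prop
  have hq0 : ∑ k : Fin L, (0 : ℝ) ^ ((k : ℕ) - k₀) * a k = a k₀ := by
    refine (Finset.sum_eq_single k₀ (fun k _ hk => ?_) (by simp)).trans (by simp)
    rcases hk.lt_or_gt with hk | hk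
    · simp [ha k hk]
    · simp [Nat.sub_ne_zero_of_lt (Fin.lt_def.1 hk)]
  refine hq0 ▸ isClosed_Ici.mem_of_frequently_of_tendsto (b := 𝓝[>] 0) ?_
    ((hq.tendsto 0).mono_left nhdsWithin_le_nhds)
  refine (h.and_eventually self_mem_nhdsWithin).mono fun ε ⟨hε, hpos⟩ => ?_
  rw [sum_pow_mul_eq_pow_mul_sum a ha] at hε
  exact nonneg_of_mul_nonneg_right hε (pow_pos hpos _)

theorem exists_neg_of_frequently_sum_pow_mul_neg
    (h : ∃ᶠ ε in 𝓝[>] 0, ∑ k : Fin L, ε ^ (k : ℕ) * a k < 0) : ∃ k, a k < 0 ∧ ∀ j < k, a j = 0 := by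
  have hne : {k | a k ≠ 0}.Nonempty := by
    by_contra h0
    have ha : ∀ k, a k = 0 := fun k => by_contra fun hk => h0 ⟨k, hk⟩
    obtain ⟨ε, hε⟩ := h.exists
    simp [ha] at hε
  obtain ⟨k, hk, hmin⟩ := wellFounded_lt.has_min _ hne
  have hlow : ∀ j < k, a j = 0 := fun j hj => by_contra fun hj' => hmin j hj' hj
  have hle : 0 ≤ -a k := nonneg_of_frequently_nonneg_sum_pow_mul (fun j => -a j)
    (fun j hj => by simp [hlow j hj]) (h.mono fun ε hε => by simpa using hε.le)
  exact ⟨k, lt_of_le_of_ne (by linarith) hk, hlow⟩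

end LexSign

theorem dot_sub {n : ℕ} (u x y : Fin n → ℝ) : dot u (x - y) = dot u x - dot u y :=
  _root_.dotProduct_sub u x y

def lexDir {n d : ℕ} (v : Fin n → Fin d → ℝ) (ε : ℝ) : Fin d → ℝ := ∑ k : Fin n, ε ^ (k : ℕ) • v k

theorem dot_lexDir {n d : ℕ} (v : Fin n → Fin d → ℝ) (ε : ℝ) (x : Fin d → ℝ) :
    dot (lexDir v ε) x = ∑ k : Fin n, ε ^ (k : ℕ) * dot (v k) x := by
  change (∑ k : Fin n, ε ^ (k : ℕ) • v k) ⬝ᵥ x = ∑ k : Fin n, ε ^ (k : ℕ) * (v k ⬝ᵥ x)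
  simp only [sum_dotProduct, smul_dotProduct, smul_eq_mul]

theorem lexDir_cons_ne_zero {L d : ℕ} (u : Fin d → ℝ) (wbar : Fin L → Fin d → ℝ) (k : Fin L)
    (hu : dot u (wbar k) = 0) (hortho : ∀ j, dot (wbar j) (wbar k) = if j = k then 1 else 0)
    {ε : ℝ} (hε : ε ≠ 0) : lexDir (Fin.cons u wbar) ε ≠ 0 := by
  intro h0
  have h := dot_lexDir (Fin.cons u wbar) ε (wbar k)
  rw [h0, Fin.sum_univ_succ] at h
  simp only [Fin.cons_zero, Fin.cons_succ, hu, hortho, mul_ite, mul_one, mul_zero,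
    Finset.sum_ite_eq', Finset.mem_univ, if_true] at h
  exact hε (by simpa [dot] using h.symm)

def offSupport {d : ℕ} (P : Finset (Fin d)) : Fin d → ℝ := fun i => if i ∈ P then 0 else -1

theorem dot_offSupport_eq_zero {d : ℕ} {P : Finset (Fin d)} {x : Fin d → ℝ}
    (hx : ∀ i ∉ P, x i = 0) : dot (offSupport P) x = 0 :=
  Finset.sum_eq_zero fun i _ => by by_cases hi : i ∈ P <;> simp [offSupport, hi, hx]

namespace CRN

theorem StronglyEndotactic.exists_frequently_neg {d m : ℕ} {N : CRN d m} (hN : N.StronglyEndotactic)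
    {w : ℝ → Fin d → ℝ} (hw : ∀ ε > 0, w ε ≠ 0) :
    ∃ r, ∃ᶠ ε in 𝓝[>] (0 : ℝ), r ∈ N.Rw (w ε) ∧ dot (w ε) (N.cvec r) < 0 := by
  refine frequently_exists.1 (Eventually.frequently ?_)
  filter_upwards [self_mem_nhdsWithin] with ε hε
  exact (hN _ (hw ε hε)).1

variable {d m : ℕ} (N : CRN d m) (P : Finset (Fin d))

def inVec (r : Fin m) : Fin d → ℝ := fun i => N.cin r i

theorem mem_RP_of_dot_offSupport_nonneg {r : Fin m} (h : 0 ≤ dot (offSupport P) (N.inVec r)) :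
    r ∈ N.RP P := by
  have hterm : ∀ i ∈ Finset.univ, offSupport P i * N.inVec r i ≤ 0 := fun i _ => by
    by_cases hi : i ∈ P <;> simp [offSupport, inVec, hi]
  have hzero := (Finset.sum_eq_zero_iff_of_nonpos hterm).1 (le_antisymm (Finset.sum_nonpos hterm) h)
  intro i hi
  simpa [offSupport, inVec, hi] using hzero i (Finset.mem_univ i)

theorem dot_offSupport_inVec_eq_zero {r : Fin m} (hr : r ∈ N.RP P) :
    dot (offSupport P) (N.inVec r) = 0 :=
  dot_offSupport_eq_zero fun i hi => by simp [inVec, hr i hi]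

variable {L : ℕ} (wbar : Fin L → Fin d → ℝ)

theorem superN_subset_RP (k : ℕ) : N.superN P wbar k ⊆ N.RP P := by
  induction k with
  | zero => exact subset_rfl
  | succ k ih =>
    rw [superN]
    split_ifs
    · exact fun r hr => ih hr.1
    · exact ih

theorem mem_superN_and_dot_eq_of_lexMax {r : Fin m} (hr : r ∈ N.RP P)
    (hmax : ∀ r' ∈ N.RP P, ∀ k : Fin L, (∀ j < k, dot (wbar j) (N.inVec r - N.inVec r') = 0) →
      0 ≤ dot (wbar k) (N.inVec r - N.inVec r')) (k : ℕ) :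
    r ∈ N.superN P wbar k ∧ ∀ r' ∈ N.superN P wbar k, ∀ j : Fin L, (j : ℕ) < k →
      dot (wbar j) (N.inVec r - N.inVec r') = 0 := by
  induction k with
  | zero => exact ⟨hr, fun _ _ _ hj => absurd hj (Nat.not_lt_zero _)⟩
  | succ k ih =>
    obtain ⟨hrk, heq⟩ := ih
    rw [superN]
    split_ifs with hk
    · have hmaxk : ∀ r' ∈ N.superN P wbar k, 0 ≤ dot (wbar ⟨k, hk⟩) (N.inVec r - N.inVec r') :=
        fun r' hr' => hmax r' (N.superN_subset_RP P wbar k hr') ⟨k, hk⟩ fun j hj => heq r' hr' j hj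
      refine ⟨⟨hrk, hmaxk⟩, fun r' ⟨hr'k, hr'max⟩ j hj => ?_⟩
      rcases (Nat.lt_succ_iff.1 hj).lt_or_eq with hj | hj
      · exact heq r' hr'k j hj
      · obtain rfl : j = ⟨k, hk⟩ := Fin.ext hj
        have hle : 0 ≤ dot (wbar ⟨k, hk⟩) (N.inVec r' - N.inVec r) := hr'max r hrk
        have hge := hmaxk r' hr'k
        rw [dot_sub] at hle hge ⊢
        linarith
    · exact ⟨hrk, fun r' hr' j hj => heq r' hr' j (by have := j.isLt; omega)⟩

theorem mem_superN_of_lexMax {r : Fin m} (hr : r ∈ N.RP P)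
    (hmax : ∀ r' ∈ N.RP P, ∀ k : Fin L, (∀ j < k, dot (wbar j) (N.inVec r - N.inVec r') = 0) →
      0 ≤ dot (wbar k) (N.inVec r - N.inVec r')) (k : ℕ) : r ∈ N.superN P wbar k :=
  (N.mem_superN_and_dot_eq_of_lexMax P wbar hr hmax k).1

end CRN

theorem stmt11_general {d m : ℕ} (ℓ' : ℕ) (hl : 0 < ℓ') (N : CRN d m)
    (hend : N.StronglyEndotactic)
    (P : Finset (Fin d)) (hRP : (N.RP P).Nonempty)
    (wbar : Fin ℓ' → Fin d → ℝ)
    (hortho : ∀ k l, dot (wbar k) (wbar l) = if k = l then 1 else 0)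
    (hsupp : ∀ k, ∀ i ∉ P, wbar k i = 0) :
    ∃ r' ∈ N.superN P wbar ℓ',
      ¬ N.OutIn P r' ∨
      ∃ k : Fin ℓ', dot (wbar k) (N.cvec r') < 0 ∧
        ∀ k' < k, dot (wbar k') (N.cvec r') = 0 := by
  set v : Fin (ℓ' + 1) → Fin d → ℝ := Fin.cons (offSupport P) wbar
  obtain ⟨r, hr⟩ := hend.exists_frequently_neg fun ε hε => lexDir_cons_ne_zero _ wbar ⟨0, hl⟩
    (dot_offSupport_eq_zero (hsupp _)) (fun j => hortho j _) hε.ne'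
  have hlex : ∀ r' k, (∀ j < k, dot (v j) (N.inVec r - N.inVec r') = 0) →
      0 ≤ dot (v k) (N.inVec r - N.inVec r') := fun r' k hk =>
    nonneg_of_frequently_nonneg_sum_pow_mul _ hk
      (hr.mono fun ε hε => dot_lexDir v ε _ ▸ hε.1 r')
  obtain ⟨r₀, hr₀⟩ := hRP
  have hrRP : r ∈ N.RP P := by
    refine N.mem_RP_of_dot_offSupport_nonneg P ?_
    simpa [v, dot_sub, N.dot_offSupport_inVec_eq_zero P hr₀] using
      hlex r₀ 0 fun j hj => absurd hj (Fin.not_lt_zero j)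
  refine ⟨r, N.mem_superN_of_lexMax P wbar hrRP (fun r' hr' k hk => ?_) ℓ',
    not_or_of_imp fun hout => ?_⟩
  · refine hlex r' k.succ fun j hj => ?_
    cases j using Fin.cases with
    | zero => simp [v, dot_sub, N.dot_offSupport_inVec_eq_zero P hrRP,
        N.dot_offSupport_inVec_eq_zero P hr']
    | succ j => exact hk j (Fin.succ_lt_succ_iff.1 hj)
  · obtain ⟨k, hk, hlow⟩ := exists_neg_of_frequently_sum_pow_mul_neg _
      (hr.mono fun ε hε => dot_lexDir v ε _ ▸ hε.2)
    cases k using Fin.cases with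
    | zero =>
      exact absurd (dot_offSupport_eq_zero fun i hi => by simp [CRN.cvec, hrRP i hi, hout i hi])
        hk.ne
    | succ k => exact ⟨k, hk, fun j hj => hlow j.succ (Fin.succ_lt_succ_iff.2 hj)⟩

theorem stmt11 {d m : ℕ} (ℓ' : ℕ) (hl : 0 < ℓ') (N : CRN d m)
    (hend : N.StronglyEndotactic)
    (P : Finset (Fin d)) (hP : P.Nonempty) (hRP : (N.RP P).Nonempty)
    (wbar : Fin ℓ' → Fin d → ℝ)
    (hortho : ∀ k l, dot (wbar k) (wbar l) = if k = l then 1 else 0)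
    (hsupp : ∀ k, ∀ i ∉ P, wbar k i = 0) :
    ∃ r' ∈ N.superN P wbar ℓ',
      ¬ N.OutIn P r' ∨
      ∃ k : Fin ℓ', dot (wbar k) (N.cvec r') < 0 ∧
        ∀ k' < k, dot (wbar k') (N.cvec r') = 0 :=
  stmt11_general ℓ' hl N hend P hRP wbar hortho hsupp
end
end

section
/- Suppose the chemical reaction network satisfies the following reachability condition: defining S_0 := ∅ and S_k := S_{k−1} ∪ {j ∉ S_{k−1} : there exists r ∈ R with (c_out^r)_j > 0 and supp(c_in^r) ⊆ S_{k−1}}, the sets S_k exhaust {1,…,d} after finitely many steps. Then for every ρ > 0 there exist D ∈ ℕ and b > 0 such that every solution ζ : [0,1] → ℝ₊^d of the mass-action ODE ζ′(t) = Σ_{r∈R} λ_r(ζ(t)) c^r with sup_{t∈[0,1]} ‖ζ(t)‖₁ ≤ ρ satisfies ζ_i(t) ≥ b·t^D for all t ∈ [0,1] and all i = 1,…,d. -/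
open Real Filter Finset Set MeasureTheory
open scoped Classical

noncomputable section

/-!
Species are switched on layer by layer along the reachability sets. If every input of a reaction
`r` producing species `i` is already bounded below by `b t^D` along all solutions, then
`λ_r(ζ) ≥ k_r b^n t^{nD}`, `n` being the order of `r`. Since `ζ` is bounded by `ρ`, the reactions
consuming `i` do so at rate at most `C ζ_i`, so `ζ_i' ≥ A t^{nD} - C ζ_i`, and comparison with the
linear equation from `ζ_i(0) ≥ 0` gives `ζ_i(t) ≥ e^{-C} A t^{nD+1} / (nD+1)`. Finitely many layers
exhaust all species.
-/

section PowerBounds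

variable {ι : Type*} [Fintype ι]

lemma pow_sum_le_prod_pow {x : ι → ℝ} {y : ℝ} (n : ι → ℕ) (hy : 0 ≤ y)
    (hyx : ∀ l, 0 < n l → y ≤ x l) : y ^ ∑ l, n l ≤ ∏ l, x l ^ n l := by
  rw [← Finset.prod_pow_eq_pow_sum]
  refine Finset.prod_le_prod (fun l _ => pow_nonneg hy _) fun l _ => ?_
  rcases (n l).eq_zero_or_pos with h | h
  · simp [h]
  · exact pow_le_pow_left₀ hy (hyx l h) _

lemma prod_pow_le_mul_pow_sum [DecidableEq ι] {x : ι → ℝ} {M : ℝ} (n : ι → ℕ)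
    (hx : ∀ l, 0 ≤ x l) (hxM : ∀ l, x l ≤ M) (hM : 1 ≤ M) {i : ι} (hi : 0 < n i) :
    ∏ l, x l ^ n l ≤ x i * M ^ ∑ l, n l := by
  have hxi : x i ^ n i ≤ x i * M ^ n i := by
    rw [← mul_pow_sub_one hi.ne' (x i)]
    exact mul_le_mul_of_nonneg_left ((pow_le_pow_left₀ (hx i) (hxM i) _).trans
      (pow_le_pow_right₀ hM (Nat.sub_le _ _))) (hx i)
  rw [← Finset.prod_pow_eq_pow_sum,
    ← Finset.mul_prod_erase _ (fun l => x l ^ n l) (Finset.mem_univ i),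
    ← Finset.mul_prod_erase _ (fun l => M ^ n l) (Finset.mem_univ i), ← mul_assoc]
  exact mul_le_mul hxi
    (Finset.prod_le_prod (fun l _ => pow_nonneg (hx l) _)
      fun l _ => pow_le_pow_left₀ (hx l) (hxM l) _)
    (Finset.prod_nonneg fun l _ => pow_nonneg (hx l) _)
    (mul_nonneg (hx i) (pow_nonneg (zero_le_one.trans hM) _))

end PowerBounds

lemma mul_pow_le_of_mul_pow_le {b b' t x : ℝ} {D D' : ℕ} (ht : t ∈ Set.Icc (0:ℝ) 1)
    (hb : 0 ≤ b) (hb' : b' ≤ b) (hD : D ≤ D') (h : b * t ^ D ≤ x) : b' * t ^ D' ≤ x :=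
  (mul_le_mul hb' (pow_le_pow_of_le_one ht.1 ht.2 hD) (pow_nonneg ht.1 _) hb).trans h

/-- Comparison with the solution of `f' = A t^E - C f`, `f 0 = 0`. -/
lemma exp_neg_mul_pow_succ_le_of_deriv_ge {f f' : ℝ → ℝ} {A C : ℝ} {E : ℕ} (hA : 0 ≤ A)
    (hC : 0 ≤ C) (hf : ∀ t ∈ Set.Icc (0:ℝ) 1, HasDerivWithinAt f (f' t) (Set.Icc 0 1) t)
    (hf0 : 0 ≤ f 0) (hf' : ∀ t ∈ Set.Icc (0:ℝ) 1, A * t ^ E - C * f t ≤ f' t)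
    {t : ℝ} (ht : t ∈ Set.Icc (0:ℝ) 1) :
    exp (-C) * (A / (E + 1)) * t ^ (E + 1) ≤ f t := by
  set g : ℝ → ℝ := fun s => exp (C * s) * f s - A / (E + 1) * s ^ (E + 1)
  have hg : ∀ s ∈ Set.Icc (0:ℝ) 1,
      HasDerivWithinAt g (exp (C * s) * (C * f s + f' s) - A * s ^ E) (Set.Icc 0 1) s := by
    intro s hs
    have hexp : HasDerivAt (fun u => exp (C * u)) (exp (C * s) * C) s := by
      simpa using ((hasDerivAt_id s).const_mul C).exp
    refine ((hexp.hasDerivWithinAt.mul (hf s hs)).sub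
      ((hasDerivAt_pow (E + 1) s).hasDerivWithinAt.const_mul (A / (E + 1)))).congr_deriv ?_
    rw [Nat.add_sub_cancel]
    push_cast
    field_simp
  have hg_mono : MonotoneOn g (Set.Icc 0 1) := by
    refine monotoneOn_of_hasDerivWithinAt_nonneg (convex_Icc 0 1)
      (fun s hs => (hg s hs).continuousWithinAt)
      (fun s hs => (hg s (interior_subset hs)).mono interior_subset) fun s hs => ?_
    rw [interior_Icc] at hs
    have hs' := Set.Ioo_subset_Icc_self hs
    have hsource : A * s ^ E ≤ exp (C * s) * (A * s ^ E) :=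
      le_mul_of_one_le_left (mul_nonneg hA (pow_nonneg hs'.1 _)) (one_le_exp (mul_nonneg hC hs'.1))
    have hsupply := mul_le_mul_of_nonneg_left (hf' s hs') (exp_pos (C * s)).le
    linarith
  have hgt : A / (E + 1) * t ^ (E + 1) ≤ exp (C * t) * f t := by
    have := hg_mono (Set.left_mem_Icc.2 zero_le_one) ht ht.1
    simp only [g, mul_zero, exp_zero, one_mul, ne_eq, Nat.add_eq_zero_iff, one_ne_zero,
      and_false, not_false_eq_true, zero_pow] at this
    linarith
  have hft : 0 ≤ f t :=
    nonneg_of_mul_nonneg_right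
      ((mul_nonneg (div_nonneg hA (by positivity)) (pow_nonneg ht.1 _)).trans hgt) (exp_pos _)
  calc exp (-C) * (A / (E + 1)) * t ^ (E + 1) = exp (-C) * (A / (E + 1) * t ^ (E + 1)) := by ring
    _ ≤ exp (-C) * (exp (C * t) * f t) := mul_le_mul_of_nonneg_left hgt (exp_pos _).le
    _ ≤ exp (-C) * (exp C * f t) := by
        gcongr
        nlinarith [ht.1, ht.2]
    _ = f t := by rw [← mul_assoc, ← exp_add, neg_add_cancel, exp_zero, one_mul]

namespace CRN

variable {d m : ℕ} (N : CRN d m)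

def order (r : Fin m) : ℕ := ∑ i, N.cin r i

/-- On `[0, M]^d` every reaction consumes species `i` at rate at most `lossRate M * xᵢ`. -/
def lossRate (M : ℝ) : ℝ := ∑ r, N.k r * N.order r * M ^ N.order r

lemma lossRate_nonneg {M : ℝ} (hM : 0 ≤ M) : 0 ≤ N.lossRate M :=
  Finset.sum_nonneg fun r _ => by have := N.k_pos r; positivity

variable {N}

lemma lam_nonneg {x : Fin d → ℝ} (hx : ∀ l, 0 ≤ x l) (r : Fin m) : 0 ≤ N.lam r x :=
  mul_nonneg (N.k_pos r).le (Finset.prod_nonneg fun l _ => pow_nonneg (hx l) _)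

lemma k_mul_pow_order_le_lam {x : Fin d → ℝ} {y : ℝ} (r : Fin m) (hy : 0 ≤ y)
    (hyx : ∀ l, 0 < N.cin r l → y ≤ x l) : N.k r * y ^ N.order r ≤ N.lam r x :=
  mul_le_mul_of_nonneg_left (pow_sum_le_prod_pow _ hy hyx) (N.k_pos r).le

lemma lam_mul_cin_le {x : Fin d → ℝ} {M : ℝ} (hx : ∀ l, 0 ≤ x l) (hxM : ∀ l, x l ≤ M)
    (hM : 1 ≤ M) (r : Fin m) (i : Fin d) :
    N.lam r x * N.cin r i ≤ N.k r * N.order r * M ^ N.order r * x i := by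
  have hk := N.k_pos r
  rcases (N.cin r i).eq_zero_or_pos with h | h
  · rw [h, Nat.cast_zero, mul_zero]
    have := hx i
    positivity
  have hcin : (N.cin r i : ℝ) ≤ N.order r :=
    Nat.cast_le.2 (Finset.single_le_sum (fun l _ => Nat.zero_le _) (Finset.mem_univ i))
  calc N.lam r x * N.cin r i ≤ N.k r * (x i * M ^ N.order r) * N.order r :=
        mul_le_mul (mul_le_mul_of_nonneg_left (prod_pow_le_mul_pow_sum _ hx hxM hM h) hk.le) hcin
          (Nat.cast_nonneg _) (by have := hx i; positivity)
    _ = N.k r * N.order r * M ^ N.order r * x i := by ring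

lemma lam_mul_cout_sub_lossRate_le {x : Fin d → ℝ} {M : ℝ} (hx : ∀ l, 0 ≤ x l)
    (hxM : ∀ l, x l ≤ M) (hM : 1 ≤ M) (r₀ : Fin m) (i : Fin d) :
    N.lam r₀ x * N.cout r₀ i - N.lossRate M * x i ≤ ∑ r, N.lam r x * N.cvec r i := by
  have hgain : N.lam r₀ x * N.cout r₀ i ≤ ∑ r, N.lam r x * N.cout r i :=
    Finset.single_le_sum (f := fun r => N.lam r x * N.cout r i)
      (fun r _ => mul_nonneg (lam_nonneg hx r) (Nat.cast_nonneg _)) (Finset.mem_univ r₀)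
  have hloss : ∑ r, N.lam r x * N.cin r i ≤ N.lossRate M * x i := by
    rw [lossRate, Finset.sum_mul]
    exact Finset.sum_le_sum fun r _ => lam_mul_cin_le hx hxM hM r i
  have hsplit : ∑ r, N.lam r x * N.cvec r i
      = ∑ r, N.lam r x * N.cout r i - ∑ r, N.lam r x * N.cin r i := by
    simp only [cvec, mul_sub, Finset.sum_sub_distrib]
  linarith

variable (N)

def IsBoundedSolution (ρ : ℝ) (ζ : ℝ → Fin d → ℝ) : Prop :=
  (∀ t ∈ Set.Icc (0:ℝ) 1, ∀ i, 0 ≤ ζ t i) ∧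
  (∀ t ∈ Set.Icc (0:ℝ) 1,
    HasDerivWithinAt ζ (fun i => ∑ r, N.lam r (ζ t) * N.cvec r i) (Set.Icc 0 1) t) ∧
  (∀ t ∈ Set.Icc (0:ℝ) 1, ∑ i, |ζ t i| ≤ ρ)

def PowLowerBoundOn (ρ : ℝ) (S : Set (Fin d)) : Prop :=
  ∃ (D : ℕ) (b : ℝ), 0 < b ∧ ∀ ζ, N.IsBoundedSolution ρ ζ →
    ∀ t ∈ Set.Icc (0:ℝ) 1, ∀ i ∈ S, b * t ^ D ≤ ζ t i

variable {N} {ρ : ℝ}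

lemma IsBoundedSolution.le_max_one {ζ : ℝ → Fin d → ℝ} (hζ : N.IsBoundedSolution ρ ζ) {t : ℝ}
    (ht : t ∈ Set.Icc (0:ℝ) 1) (i : Fin d) : ζ t i ≤ max ρ 1 :=
  calc ζ t i ≤ ∑ l, |ζ t l| :=
        (le_abs_self _).trans (Finset.single_le_sum (fun l _ => abs_nonneg (ζ t l))
          (Finset.mem_univ i))
    _ ≤ max ρ 1 := (hζ.2.2 t ht).trans (le_max_left _ _)

lemma powLowerBoundOn_empty : N.PowLowerBoundOn ρ ∅ :=
  ⟨0, 1, one_pos, fun _ _ _ _ _ hi => hi.elim⟩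

lemma PowLowerBoundOn.union {S T : Set (Fin d)} (hS : N.PowLowerBoundOn ρ S)
    (hT : N.PowLowerBoundOn ρ T) : N.PowLowerBoundOn ρ (S ∪ T) := by
  obtain ⟨D, b, hb, hS⟩ := hS
  obtain ⟨D', b', hb', hT⟩ := hT
  refine ⟨max D D', min b b', lt_min hb hb', fun ζ hζ t ht i hi => ?_⟩
  rcases hi with hi | hi
  · exact mul_pow_le_of_mul_pow_le ht hb.le (min_le_left _ _) (le_max_left _ _) (hS ζ hζ t ht i hi)
  · exact mul_pow_le_of_mul_pow_le ht hb'.le (min_le_right _ _) (le_max_right _ _)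
      (hT ζ hζ t ht i hi)

lemma powLowerBoundOn_of_forall_singleton {S : Set (Fin d)}
    (h : ∀ i ∈ S, N.PowLowerBoundOn ρ {i}) : N.PowLowerBoundOn ρ S := by
  refine Set.Finite.induction_on_subset (motive := fun T _ => N.PowLowerBoundOn ρ T) S
    S.toFinite powLowerBoundOn_empty fun hi _ _ hT => ?_
  rw [Set.insert_eq]
  exact (h _ hi).union hT

lemma PowLowerBoundOn.singleton_of_reaction {S : Set (Fin d)} (hS : N.PowLowerBoundOn ρ S)
    {r : Fin m} {i : Fin d} (hout : 0 < N.cout r i) (hin : ∀ l, 0 < N.cin r l → l ∈ S) :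
    N.PowLowerBoundOn ρ {i} := by
  obtain ⟨D, b, hb, hS⟩ := hS
  set A := N.k r * b ^ N.order r
  have hA : 0 < A := mul_pos (N.k_pos r) (pow_pos hb _)
  have hM : 1 ≤ max ρ 1 := le_max_right _ _
  refine ⟨D * N.order r + 1, exp (-N.lossRate (max ρ 1)) * (A / ((D * N.order r : ℕ) + 1)),
    mul_pos (exp_pos _) (div_pos hA (by positivity)), ?_⟩
  intro ζ hζ t ht j hj
  rw [Set.mem_singleton_iff.1 hj]
  refine exp_neg_mul_pow_succ_le_of_deriv_ge (f := fun s => ζ s i) hA.le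
    (N.lossRate_nonneg (zero_le_one.trans hM)) (fun s hs => hasDerivWithinAt_pi.1 (hζ.2.1 s hs) i)
    (hζ.1 0 (Set.left_mem_Icc.2 zero_le_one) i) (fun s hs => ?_) ht
  have hlam : A * s ^ (D * N.order r) ≤ N.lam r (ζ s) :=
    calc A * s ^ (D * N.order r) = N.k r * (b * s ^ D) ^ N.order r := by
          rw [mul_pow, ← pow_mul]; ring
      _ ≤ N.lam r (ζ s) := k_mul_pow_order_le_lam r (mul_nonneg hb.le (pow_nonneg hs.1 _))
          fun l hl => hS ζ hζ s hs l (hin l hl)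
  have hcout : N.lam r (ζ s) ≤ N.lam r (ζ s) * N.cout r i :=
    le_mul_of_one_le_right (lam_nonneg (hζ.1 s hs) r) (by exact_mod_cast hout)
  linarith [lam_mul_cout_sub_lossRate_le (N := N) (hζ.1 s hs) (hζ.le_max_one hs) hM r i]

variable (N ρ)

theorem powLowerBoundOn_reachSet : ∀ k, N.PowLowerBoundOn ρ (N.reachSet k)
  | 0 => powLowerBoundOn_empty
  | k + 1 => (powLowerBoundOn_reachSet k).union <| powLowerBoundOn_of_forall_singleton
      fun _ ⟨_, hout, hin⟩ => (powLowerBoundOn_reachSet k).singleton_of_reaction hout hin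

end CRN

theorem stmt14 {d m : ℕ} (N : CRN d m) (hreach : ∃ K, ∀ i, i ∈ N.reachSet K) :
    ∀ ρ : ℝ, 0 < ρ → ∃ (D : ℕ) (b : ℝ), 0 < b ∧
      ∀ ζ : ℝ → Fin d → ℝ,
        (∀ t ∈ Set.Icc (0:ℝ) 1, ∀ i, 0 ≤ ζ t i) →
        (∀ t ∈ Set.Icc (0:ℝ) 1,
          HasDerivWithinAt ζ (fun i => ∑ r, N.lam r (ζ t) * N.cvec r i) (Set.Icc 0 1) t) →
        (∀ t ∈ Set.Icc (0:ℝ) 1, ∑ i, |ζ t i| ≤ ρ) →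
        ∀ t ∈ Set.Icc (0:ℝ) 1, ∀ i, b * t ^ D ≤ ζ t i := by
  intro ρ _
  obtain ⟨K, hK⟩ := hreach
  obtain ⟨D, b, hb, hbound⟩ := N.powLowerBoundOn_reachSet ρ K
  exact ⟨D, b, hb, fun ζ hpos hder hsum t ht i => hbound ζ ⟨hpos, hder, hsum⟩ t ht i (hK i)⟩
end
end

section
/- Let P_1,…,P_d be d-variate polynomials with nonnegative coefficients and let C > 0. Define S_0 := ∅ and S_k := S_{k−1} ∪ {i ∉ S_{k−1} : P_i contains a monomial with strictly positive coefficient involving only variables with indices in S_{k−1}} (a strictly positive constant term of P_i qualifies when S_{k−1} = ∅), and assume S_k = {1,…,d} for some finite k. Then there exist D ∈ ℕ and b > 0 such that every solution y : [0,1] → ℝ₊^d of the ODE system y_i′(t) = P_i(y(t)) − C·y_i(t) with y(0) ∈ ℝ₊^d satisfies y_i(t) ≥ b·t^D for all t ∈ [0,1] and all i = 1,…,d, uniformly over the initial condition y(0). -/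
open Real Filter Finset Set MeasureTheory
open scoped Classical

noncomputable section

def GoodSol (d : ℕ) (Q : Fin d → MvPolynomial (Fin d) ℝ) (C : ℝ) (y : ℝ → Fin d → ℝ) : Prop :=
  (∀ t ∈ Set.Icc (0:ℝ) 1, ∀ i, 0 ≤ y t i) ∧
  (∀ t ∈ Set.Icc (0:ℝ) 1,
    HasDerivWithinAt y (fun i => MvPolynomial.eval (y t) (Q i) - C * y t i) (Set.Icc 0 1) t)

lemma ode_lb (y f : ℝ → ℝ) (a : ℝ) (ha : 0 ≤ a) (n : ℕ) (C : ℝ) (hC : 0 < C)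
    (hy0 : ∀ t ∈ Set.Icc (0:ℝ) 1, 0 ≤ y t)
    (hder : ∀ t ∈ Set.Icc (0:ℝ) 1, HasDerivWithinAt y (f t) (Set.Icc 0 1) t)
    (hf : ∀ t ∈ Set.Icc (0:ℝ) 1, a * t ^ n - C * y t ≤ f t) :
    ∀ t ∈ Set.Icc (0:ℝ) 1, a / (n + 1) * Real.exp (-C) * t ^ (n + 1) ≤ y t := by
  set z : ℝ → ℝ := fun t => Real.exp (C * t) * y t - a / (n + 1) * t ^ (n + 1) with hzdef
  have hzder : ∀ t ∈ Set.Icc (0:ℝ) 1, HasDerivWithinAt z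
      (Real.exp (C * t) * C * y t + Real.exp (C * t) * f t
        - a / (n + 1) * (((n:ℝ) + 1) * t ^ n)) (Set.Icc 0 1) t := by
    intro t ht
    have h1 : HasDerivWithinAt (fun u => Real.exp (C * u)) (Real.exp (C * t) * C)
        (Set.Icc 0 1) t := by
      simpa using (((hasDerivAt_id t).const_mul C).exp).hasDerivWithinAt (s := Set.Icc 0 1)
    have h2 := h1.mul (hder t ht)
    have h3 : HasDerivWithinAt (fun u : ℝ => a / (n + 1) * u ^ (n + 1))
        (a / (n + 1) * (((n:ℝ) + 1) * t ^ n)) (Set.Icc 0 1) t := by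
      have h := ((hasDerivAt_pow (n + 1) t).const_mul
        ((a : ℝ) / (n + 1))).hasDerivWithinAt (s := Set.Icc (0:ℝ) 1)
      simpa using h
    exact h2.sub h3
  have hmono : MonotoneOn z (Set.Icc 0 1) := by
    apply monotoneOn_of_deriv_nonneg (convex_Icc 0 1)
    · exact fun t ht => (hzder t ht).continuousWithinAt
    · intro t ht
      exact ((hzder t (interior_subset ht)).differentiableWithinAt).mono interior_subset
    · intro t ht
      rw [interior_Icc] at ht
      have ht' : t ∈ Set.Icc (0:ℝ) 1 := Set.mem_Icc.mpr ⟨ht.1.le, ht.2.le⟩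
      have hd := (hzder t ht').hasDerivAt (Icc_mem_nhds ht.1 ht.2)
      rw [hd.deriv]
      have he : (1:ℝ) ≤ Real.exp (C * t) := by
        have : (0:ℝ) ≤ C * t := mul_nonneg hC.le ht.1.le
        simpa using Real.exp_le_exp.mpr this
      have hsum : a * t ^ n ≤ C * y t + f t := by
        have := hf t ht'; linarith
      have hpos : (0:ℝ) ≤ a * t ^ n := mul_nonneg ha (pow_nonneg ht.1.le _)
      have h4 : a * t ^ n ≤ Real.exp (C * t) * (C * y t + f t) := by
        calc a * t ^ n = 1 * (a * t ^ n) := by ring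
          _ ≤ Real.exp (C * t) * (C * y t + f t) := by
              apply mul_le_mul he hsum hpos (le_trans zero_le_one he)
      have h5 : a / (n + 1) * (((n:ℝ) + 1) * t ^ n) = a * t ^ n := by
        field_simp
      rw [h5]; nlinarith [h4]
  intro t ht
  have h0 : z 0 ≤ z t := hmono (Set.mem_Icc.mpr ⟨le_refl 0, zero_le_one⟩) ht ht.1
  have hz0 : z 0 = y 0 := by simp [hzdef]
  have hy00 : 0 ≤ y 0 := hy0 0 (Set.mem_Icc.mpr ⟨le_refl 0, zero_le_one⟩)
  have hA : a / (n + 1) * t ^ (n + 1) ≤ Real.exp (C * t) * y t := by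
    simp only [hzdef, mul_zero, Real.exp_zero, one_mul, zero_pow, Nat.succ_ne_zero,
      ne_eq, not_false_iff] at h0
    have h0' : y 0 - 0 ≤ Real.exp (C * t) * y t - a / (n + 1) * t ^ (n + 1) := by
      simpa using h0
    linarith
  have hApos : 0 ≤ a / (n + 1) * t ^ (n + 1) :=
    mul_nonneg (by positivity) (pow_nonneg ht.1 _)
  have hexp : Real.exp (-C) ≤ Real.exp (-(C * t)) := by
    apply Real.exp_le_exp.mpr
    nlinarith [ht.1, ht.2, hC]
  have hinv : Real.exp (C * t) * Real.exp (-(C * t)) = 1 := by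
    rw [← Real.exp_add]; simp
  calc a / (n + 1) * Real.exp (-C) * t ^ (n + 1)
      = (a / (n + 1) * t ^ (n + 1)) * Real.exp (-C) := by ring
    _ ≤ (a / (n + 1) * t ^ (n + 1)) * Real.exp (-(C * t)) :=
        mul_le_mul_of_nonneg_left hexp hApos
    _ ≤ (Real.exp (C * t) * y t) * Real.exp (-(C * t)) :=
        mul_le_mul_of_nonneg_right hA (Real.exp_pos _).le
    _ = y t := by rw [mul_comm (Real.exp (C * t)) (y t), mul_assoc, hinv, mul_one]

lemma evalLB {d : ℕ} (p : MvPolynomial (Fin d) ℝ) (hp : ∀ s, 0 ≤ MvPolynomial.coeff s p)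
    (x : Fin d → ℝ) (hx : ∀ i, 0 ≤ x i) (s : Fin d →₀ ℕ) :
    MvPolynomial.coeff s p * ∏ l ∈ s.support, x l ^ s l ≤ MvPolynomial.eval x p := by
  rw [MvPolynomial.eval_eq]
  have hterm : ∀ u ∈ p.support, 0 ≤ MvPolynomial.coeff u p * ∏ l ∈ u.support, x l ^ u l :=
    fun u _ => mul_nonneg (hp u) (Finset.prod_nonneg fun l _ => pow_nonneg (hx l) _)
  by_cases hs : s ∈ p.support
  · exact Finset.single_le_sum hterm hs
  · have h0 : MvPolynomial.coeff s p = 0 := by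
      by_contra h
      exact hs (MvPolynomial.mem_support_iff.mpr h)
    rw [h0, zero_mul]
    exact Finset.sum_nonneg hterm

lemma combineLB {d : ℕ} {Q : Fin d → MvPolynomial (Fin d) ℝ} {C : ℝ} (S : Set (Fin d))
    (H : ∀ i ∈ S, ∃ D b, 0 < b ∧ ∀ y, GoodSol d Q C y →
      ∀ t ∈ Set.Icc (0:ℝ) 1, b * t ^ D ≤ y t i) :
    ∃ D b, 0 < b ∧ ∀ y, GoodSol d Q C y →
      ∀ t ∈ Set.Icc (0:ℝ) 1, ∀ i ∈ S, b * t ^ D ≤ y t i := by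
  have H' : ∀ i, ∃ D b, 0 < b ∧ (i ∈ S → ∀ y, GoodSol d Q C y →
      ∀ t ∈ Set.Icc (0:ℝ) 1, b * t ^ D ≤ y t i) := by
    intro i
    by_cases hi : i ∈ S
    · obtain ⟨D, b, hb, h⟩ := H i hi; exact ⟨D, b, hb, fun _ => h⟩
    · exact ⟨0, 1, one_pos, fun h => absurd h hi⟩
  choose f g hg hbd using H'
  refine ⟨Finset.univ.sup f, ∏ i, min 1 (g i),
    Finset.prod_pos (fun i _ => lt_min one_pos (hg i)), ?_⟩
  intro y hy t ht i hi
  have h1 : (∏ j, min 1 (g j)) ≤ g i := by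
    rw [← Finset.mul_prod_erase Finset.univ _ (Finset.mem_univ i)]
    calc min 1 (g i) * ∏ j ∈ Finset.univ.erase i, min 1 (g j)
        ≤ min 1 (g i) * 1 := by
          apply mul_le_mul_of_nonneg_left
            (Finset.prod_le_one (fun j _ => (lt_min one_pos (hg j)).le)
              (fun j _ => min_le_left _ _))
            (lt_min one_pos (hg i)).le
      _ ≤ g i := by rw [mul_one]; exact min_le_right _ _
  have h2 : t ^ (Finset.univ.sup f) ≤ t ^ (f i) :=
    pow_le_pow_of_le_one ht.1 ht.2 (Finset.le_sup (Finset.mem_univ i))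
  calc (∏ j, min 1 (g j)) * t ^ (Finset.univ.sup f)
      ≤ g i * t ^ (f i) := mul_le_mul h1 h2 (pow_nonneg ht.1 _) (hg i).le
    _ ≤ y t i := hbd i hi y hy t ht

lemma mainLB {d : ℕ} (Q : Fin d → MvPolynomial (Fin d) ℝ)
    (hcoeff : ∀ i s, 0 ≤ MvPolynomial.coeff s (Q i)) (C : ℝ) (hC : 0 < C) :
    ∀ k, ∀ i ∈ polyReach d Q k, ∃ D b, 0 < b ∧ ∀ y, GoodSol d Q C y →
      ∀ t ∈ Set.Icc (0:ℝ) 1, b * t ^ D ≤ y t i := by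
  intro k
  induction k with
  | zero => intro i hi; exact absurd hi (Set.notMem_empty i)
  | succ k ih =>
    intro i hi
    rcases hi with hi | hi
    · exact ih i hi
    · obtain ⟨s, hs, hsup⟩ := hi
      obtain ⟨D, b, hb, hbd⟩ := combineLB (C := C) (polyReach d Q k) ih
      set N := ∑ l ∈ s.support, s l with hN
      set a : ℝ := MvPolynomial.coeff s (Q i) * b ^ N with ha
      have ha0 : 0 ≤ a := mul_nonneg hs.le (pow_nonneg hb.le _)
      refine ⟨D * N + 1, a / (D * N + 1) * Real.exp (-C), by positivity, ?_⟩
      intro y hy t ht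
      have key := ode_lb (fun u => y u i)
        (fun u => MvPolynomial.eval (y u) (Q i) - C * y u i) a ha0 (D * N) C hC
        (fun u hu => hy.1 u hu i)
        (fun u hu => (hasDerivWithinAt_pi.mp (hy.2 u hu)) i)
        ?_ t ht
      · convert key using 2
        push_cast
        ring
      intro u hu
      have h1 : MvPolynomial.coeff s (Q i) * ∏ l ∈ s.support, (y u l) ^ s l ≤
          MvPolynomial.eval (y u) (Q i) := evalLB _ (hcoeff i) _ (hy.1 u hu) s
      have hbu : 0 ≤ b * u ^ D := mul_nonneg hb.le (pow_nonneg hu.1 _)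
      have h2 : ∏ l ∈ s.support, (b * u ^ D) ^ s l ≤ ∏ l ∈ s.support, (y u l) ^ s l := by
        apply Finset.prod_le_prod (fun l _ => pow_nonneg hbu _)
        intro l hl
        exact pow_le_pow_left₀ hbu
          (hbd y hy u hu l (hsup l (Finsupp.mem_support_iff.mp hl))) _
      have h3 : ∏ l ∈ s.support, (b * u ^ D) ^ s l = b ^ N * u ^ (D * N) := by
        rw [Finset.prod_pow_eq_pow_sum, ← hN, mul_pow, ← pow_mul]
      have h4 : a * u ^ (D * N) ≤ MvPolynomial.eval (y u) (Q i) := by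
        calc a * u ^ (D * N) = MvPolynomial.coeff s (Q i) * (b ^ N * u ^ (D * N)) := by
              rw [ha]; ring
          _ = MvPolynomial.coeff s (Q i) * ∏ l ∈ s.support, (b * u ^ D) ^ s l := by rw [h3]
          _ ≤ MvPolynomial.coeff s (Q i) * ∏ l ∈ s.support, (y u l) ^ s l :=
              mul_le_mul_of_nonneg_left h2 hs.le
          _ ≤ MvPolynomial.eval (y u) (Q i) := h1
      linarith

theorem stmt15 (d : ℕ) (Q : Fin d → MvPolynomial (Fin d) ℝ)
    (hcoeff : ∀ i s, 0 ≤ MvPolynomial.coeff s (Q i)) (C : ℝ) (hC : 0 < C)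
    (hreach : ∃ K, ∀ i, i ∈ polyReach d Q K) :
    ∃ (D : ℕ) (b : ℝ), 0 < b ∧
      ∀ y : ℝ → Fin d → ℝ,
        (∀ t ∈ Set.Icc (0:ℝ) 1, ∀ i, 0 ≤ y t i) →
        (∀ t ∈ Set.Icc (0:ℝ) 1,
          HasDerivWithinAt y (fun i => MvPolynomial.eval (y t) (Q i) - C * y t i)
            (Set.Icc 0 1) t) →
        ∀ t ∈ Set.Icc (0:ℝ) 1, ∀ i, b * t ^ D ≤ y t i := by
  obtain ⟨K, hK⟩ := hreach
  obtain ⟨D, b, hb, h⟩ := combineLB (C := C) Set.univ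
    (fun i _ => mainLB Q hcoeff C hC K i (hK i))
  refine ⟨D, b, hb, ?_⟩
  intro y h1 h2 t ht i
  exact h y ⟨h1, h2⟩ t ht i (Set.mem_univ i)

end
end

section
/- Suppose the conic hull of the reaction vectors {c^r}_{r∈R} equals ℝ^d. Let D ⊂ ℝ₊^d be compact and set λ̄ := max over r ∈ R and z ∈ D of λ_r(z), c̄⋆ := max_r ‖c_in^r‖₁, q̄ := max(e, max_{‖ξ‖₁ ≤ 1} min{‖q‖_∞ : q ∈ ℝ₊^m, Σ_r q_r c^r = ξ}), and γ := λ̄ − q̄ + q̄·log(q̄ / min_r min(k_r, 1)). Then for every z ∈ D with strictly positive coordinates and every ξ ∈ ℝ^d with ‖ξ‖₁ ≤ 1: L(λ(z), ξ) ≤ m·[γ + q̄·c̄⋆·(log min_{i} z_i)_−], where (a)_− := max(−a, 0). -/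
open Real Filter Finset Set MeasureTheory
open scoped Classical

noncomputable section

/-!
Write `ξ = ∑ r, q r • c^r` with `q ≥ 0`. Then `⟨θ, ξ⟩ - ∑ r, λ_r (exp ⟨θ, c^r⟩ - 1)` splits into
one term `q_r t - λ_r (exp t - 1)` per reaction, and by Fenchel–Young each is at most
`λ_r - q_r + q_r log (q_r / λ_r)`. On `D` the rates are at most `λ̄` and at least
`a = k_min · exp (-c̄⋆ s)` with `s = (log min_i z_i)_-`, and `q ↦ q log (q / a) - q` on `[0, Q]`
is dominated by its value at `Q` once `Q ≥ e a`, which holds for `Q ≥ e` because `a ≤ 1`.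
Writing `±e_i` as conic combinations bounds the representation constant, so for every `Q > q̄` some
representation has `q_r < Q`; letting `Q ↓ q̄` gives the claim.
-/
lemma mul_sub_mul_exp_sub_one_le {q l : ℝ} (hq : 0 ≤ q) (hl : 0 < l) (t : ℝ) :
    q * t - l * (exp t - 1) ≤ l - q + q * log (q / l) := by
  rcases hq.eq_or_lt with rfl | hq
  · simp only [zero_mul, zero_sub, sub_zero, add_zero]
    nlinarith [exp_pos t]
  · have h := add_one_le_exp (t - log (q / l))
    rw [exp_sub, exp_log (div_pos hq hl)] at h
    have key : q * (t - log (q / l) + 1) ≤ l * exp t :=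
      calc q * (t - log (q / l) + 1) ≤ q * (exp t / (q / l)) := by gcongr
        _ = l * exp t := by field_simp
    linarith

lemma mul_log_div_sub_le {q Q a l : ℝ} (hq : 0 ≤ q) (hqQ : q ≤ Q) (ha : 0 < a) (hal : a ≤ l)
    (hQ : exp 1 * a ≤ Q) : q * log (q / l) - q ≤ Q * log (Q / a) - Q := by
  have hl : 0 < l := ha.trans_le hal
  have hQpos : 0 < Q := lt_of_lt_of_le (by positivity) hQ
  have hQa : 1 ≤ log (Q / a) := by
    rw [le_log_iff_exp_le (by positivity)]
    exact (le_div_iff₀ ha).mpr hQ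
  have hlog : q * log (q / l) ≤ q * log (Q / a) := by
    rcases hq.eq_or_lt with rfl | hq
    · simp
    · gcongr
  nlinarith [mul_nonneg (sub_nonneg.2 hqQ) (sub_nonneg.2 hQa)]

lemma le_of_forall_gt_of_continuousAt {f : ℝ → ℝ} {a x : ℝ} (hf : ContinuousAt f a)
    (h : ∀ b, a < b → x ≤ f b) : x ≤ f a :=
  ge_of_tendsto (hf.mono_left nhdsWithin_le_nhds)
    (eventually_nhdsWithin_of_forall (s := Set.Ioi a) h)

section ConicRepresentation

variable {ι κ : Type*} [Fintype ι] [Fintype κ] (c : κ → ι → ℝ)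

def conicRepNorms (ξ : ι → ℝ) : Set ℝ :=
  {y | ∃ q : κ → ℝ, (∀ r, 0 ≤ q r) ∧ (∀ i, ∑ r, q r * c r i = ξ i) ∧ y = ⨆ r', |q r'|}

def conicRepConst : ℝ :=
  sSup {y | ∃ ξ : ι → ℝ, (∑ i, |ξ i|) ≤ 1 ∧ y = sInf (conicRepNorms c ξ)}

variable {c}

lemma exists_bounded_conicRep
    (hc : ∀ ξ : ι → ℝ, ∃ q : κ → ℝ, (∀ r, 0 ≤ q r) ∧ ∀ i, ∑ r, q r * c r i = ξ i) :
    ∃ M, 0 ≤ M ∧ ∀ ξ : ι → ℝ, ∑ i, |ξ i| ≤ 1 →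
      ∃ q : κ → ℝ, (∀ r, 0 ≤ q r) ∧ (∀ i, ∑ r, q r * c r i = ξ i) ∧ ∀ r, q r ≤ M := by
  classical
  choose P hP0 hP using fun i => hc (Pi.single i 1)
  choose Q hQ0 hQ using fun i => hc (-Pi.single i 1)
  set M := ∑ p : ι × κ, (P p.1 p.2 + Q p.1 p.2)
  have hPQ : ∀ i r, P i r + Q i r ≤ M := fun i r =>
    Finset.single_le_sum (f := fun p : ι × κ => P p.1 p.2 + Q p.1 p.2)
      (fun p _ => add_nonneg (hP0 _ _) (hQ0 _ _)) (Finset.mem_univ (i, r))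
  have hM : 0 ≤ M := Finset.sum_nonneg fun p _ => add_nonneg (hP0 _ _) (hQ0 _ _)
  refine ⟨M, hM, fun ξ hξ => ⟨fun r => ∑ i, ((ξ i)⁺ * P i r + (ξ i)⁻ * Q i r), fun r => ?_,
    fun j => ?_, fun r => ?_⟩⟩
  · exact Finset.sum_nonneg fun i _ =>
      add_nonneg (mul_nonneg (posPart_nonneg _) (hP0 i r)) (mul_nonneg (negPart_nonneg _) (hQ0 i r))
  · calc ∑ r, (∑ i, ((ξ i)⁺ * P i r + (ξ i)⁻ * Q i r)) * c r j
        = ∑ i, ((ξ i)⁺ * ∑ r, P i r * c r j + (ξ i)⁻ * ∑ r, Q i r * c r j) := by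
          simp only [Finset.sum_mul, Finset.mul_sum, ← Finset.sum_add_distrib]
          rw [Finset.sum_comm]
          refine Finset.sum_congr rfl fun i _ => Finset.sum_congr rfl fun r _ => by ring
      _ = ∑ i, ((ξ i)⁺ - (ξ i)⁻) * (Pi.single i 1 : ι → ℝ) j := by
          simp only [hP, hQ, Pi.neg_apply]
          refine Finset.sum_congr rfl fun i _ => by ring
      _ = ξ j := by simp [posPart_sub_negPart, Pi.single_apply]
  · calc ∑ i, ((ξ i)⁺ * P i r + (ξ i)⁻ * Q i r) ≤ ∑ i, ((ξ i)⁺ * M + (ξ i)⁻ * M) := by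
          gcongr with i
          · linarith [hPQ i r, hQ0 i r]
          · linarith [hPQ i r, hP0 i r]
      _ = (∑ i, |ξ i|) * M := by simp only [← add_mul, posPart_add_negPart, Finset.sum_mul]
      _ ≤ M := mul_le_of_le_one_left hM hξ

lemma exists_conicRep_lt
    (hc : ∀ ξ : ι → ℝ, ∃ q : κ → ℝ, (∀ r, 0 ≤ q r) ∧ ∀ i, ∑ r, q r * c r i = ξ i)
    {ξ : ι → ℝ} (hξ : ∑ i, |ξ i| ≤ 1) {Q : ℝ} (hQ : conicRepConst c < Q) :
    ∃ q : κ → ℝ, (∀ r, 0 ≤ q r) ∧ (∀ i, ∑ r, q r * c r i = ξ i) ∧ ∀ r, q r < Q := by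
  obtain ⟨M, hM0, hM⟩ := exists_bounded_conicRep hc
  have hnorm : ∀ ξ' : ι → ℝ, ∑ i, |ξ' i| ≤ 1 → ∃ y ∈ conicRepNorms c ξ', y ≤ M := by
    intro ξ' hξ'
    obtain ⟨q, hq0, hq, hqM⟩ := hM ξ' hξ'
    refine ⟨_, ⟨q, hq0, hq, rfl⟩, Real.iSup_le (fun r => ?_) hM0⟩
    rw [abs_of_nonneg (hq0 r)]
    exact hqM r
  have hbdd : ∀ ξ' : ι → ℝ, BddBelow (conicRepNorms c ξ') := by
    intro ξ'
    refine ⟨0, ?_⟩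
    rintro _ ⟨q, -, -, rfl⟩
    exact Real.iSup_nonneg fun r => abs_nonneg (q r)
  have hle : sInf (conicRepNorms c ξ) ≤ conicRepConst c := by
    refine le_csSup ⟨M, ?_⟩ ⟨ξ, hξ, rfl⟩
    rintro _ ⟨ξ', hξ', rfl⟩
    obtain ⟨y, hy, hyM⟩ := hnorm ξ' hξ'
    exact csInf_le_of_le (hbdd ξ') hy hyM
  obtain ⟨y, hy, -⟩ := hnorm ξ hξ
  obtain ⟨_, ⟨q, hq0, hq, rfl⟩, hqQ⟩ := exists_lt_of_csInf_lt ⟨y, hy⟩ (hle.trans_lt hQ)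
  exact ⟨q, hq0, hq, fun r =>
    (le_abs_self _).trans_lt ((le_ciSup (Finite.bddAbove_range _) r).trans_lt hqQ)⟩

end ConicRepresentation

lemma exp_neg_max_neg_log_iInf_le {ι : Type*} [Finite ι] {z : ι → ℝ} (hz : ∀ i, 0 < z i)
    (i : ι) : exp (-max (-log (⨅ i, z i)) 0) ≤ z i := by
  have : Nonempty ι := ⟨i⟩
  obtain ⟨i₀, hi₀⟩ := exists_eq_ciInf_of_finite (f := z)
  calc exp (-max (-log (⨅ i, z i)) 0) ≤ exp (log (⨅ i, z i)) := by
        gcongr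
        linarith [le_max_left (-log (⨅ i, z i)) 0]
    _ = ⨅ i, z i := exp_log (hi₀ ▸ hz i₀)
    _ ≤ z i := ciInf_le (Finite.bddBelow_range z) i

namespace CRN

variable {d m : ℕ} (N : CRN d m)

lemma lam_pos {z : Fin d → ℝ} (hz : ∀ i, 0 < z i) (r : Fin m) : 0 < N.lam r z :=
  mul_pos (N.k_pos r) (Finset.prod_pos fun i _ => pow_pos (hz i) _)

lemma lam_le_sSup {D : Set (Fin d → ℝ)} (hD : IsCompact D) {z : Fin d → ℝ} (hz : z ∈ D)
    (r : Fin m) : N.lam r z ≤ sSup {y | ∃ r, ∃ z ∈ D, y = N.lam r z} := by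
  refine le_csSup ?_ ⟨r, z, hz, rfl⟩
  have hcont : ∀ r, Continuous (N.lam r) := fun r => by unfold lam; fun_prop
  refine ((Set.finite_univ.bddAbove_biUnion).2 fun r _ => (hD.image (hcont r)).bddAbove).mono ?_
  rintro _ ⟨r, z, hz, rfl⟩
  exact Set.mem_biUnion (Set.mem_univ r) ⟨z, hz, rfl⟩

lemma mul_exp_neg_le_lam {κ c s : ℝ} {r : Fin m} {z : Fin d → ℝ} (hκ : κ ≤ N.k r)
    (hc : ∑ i, (N.cin r i : ℝ) ≤ c) (hs : 0 ≤ s) (hz : ∀ i, exp (-s) ≤ z i) :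
    κ * exp (-(c * s)) ≤ N.lam r z := by
  have hprod : exp (-(c * s)) ≤ ∏ i, z i ^ N.cin r i :=
    calc exp (-(c * s)) ≤ exp (∑ i, (N.cin r i : ℝ) * -s) := by
          rw [← Finset.sum_mul]
          gcongr
          nlinarith
      _ = ∏ i, exp (-s) ^ N.cin r i := by simp only [exp_sum, exp_nat_mul]
      _ ≤ ∏ i, z i ^ N.cin r i := by gcongr with i; exact hz i
  exact mul_le_mul hκ hprod (exp_pos _).le (N.k_pos r).le

lemma iInf_min_k_pos (r : Fin m) : 0 < ⨅ r, min (N.k r) 1 := by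
  have : Nonempty (Fin m) := ⟨r⟩
  obtain ⟨r₀, h⟩ := exists_eq_ciInf_of_finite (f := fun r => min (N.k r) 1)
  exact h ▸ lt_min (N.k_pos r₀) one_pos

lemma mul_sub_lam_mul_exp_sub_one_le {D : Set (Fin d → ℝ)} (hD : IsCompact D)
    {z : Fin d → ℝ} (hzD : z ∈ D) (hz : ∀ i, 0 < z i) {q Q : ℝ} (hq : 0 ≤ q) (hqQ : q ≤ Q)
    (hQ : exp 1 ≤ Q) (r : Fin m) (t : ℝ) :
    q * t - N.lam r z * (exp t - 1) ≤
      sSup {y | ∃ r, ∃ z ∈ D, y = N.lam r z} - Q + Q * log (Q / ⨅ r, min (N.k r) 1) +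
        Q * (⨆ r, ∑ i, (N.cin r i : ℝ)) * max (-log (⨅ i, z i)) 0 := by
  set κ := ⨅ r, min (N.k r) 1
  set c := ⨆ r, ∑ i, (N.cin r i : ℝ)
  set s := max (-log (⨅ i, z i)) 0
  have hκ : 0 < κ := N.iInf_min_k_pos r
  have hκr : κ ≤ min (N.k r) 1 := ciInf_le (Finite.bddBelow_range _) r
  have hc : ∑ i, (N.cin r i : ℝ) ≤ c :=
    le_ciSup (Finite.bddAbove_range fun r => ∑ i, (N.cin r i : ℝ)) r
  have hcs : 0 ≤ c * s :=
    mul_nonneg ((Finset.sum_nonneg fun i _ => Nat.cast_nonneg _).trans hc) (le_max_right _ _)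
  set a := κ * exp (-(c * s))
  have ha : 0 < a := by positivity
  have hal : a ≤ N.lam r z :=
    N.mul_exp_neg_le_lam (hκr.trans (min_le_left _ _)) hc (le_max_right _ _)
      (exp_neg_max_neg_log_iInf_le hz)
  have hea : exp 1 * a ≤ Q := by
    refine le_trans ?_ hQ
    refine mul_le_of_le_one_right (exp_pos 1).le (mul_le_one₀ (hκr.trans (min_le_right _ _))
      (exp_pos _).le ?_)
    exact exp_le_one_iff.mpr (by linarith)
  have hlog : log (Q / a) = log (Q / κ) + c * s := by
    rw [div_mul_eq_div_div, div_eq_mul_inv (Q / κ), ← exp_neg, neg_neg,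
      log_mul (div_pos ((exp_pos 1).trans_le hQ) hκ).ne' (exp_pos _).ne', log_exp]
  calc q * t - N.lam r z * (exp t - 1) ≤ N.lam r z - q + q * log (q / N.lam r z) :=
        mul_sub_mul_exp_sub_one_le hq (N.lam_pos hz r) t
    _ ≤ sSup {y | ∃ r, ∃ z ∈ D, y = N.lam r z} - Q + Q * log (Q / a) := by
        linarith [N.lam_le_sSup hD hzD r, mul_log_div_sub_le hq hqQ ha hal hea]
    _ = _ := by rw [hlog]; ring

lemma Lagr_le_sum {lamv : Fin m → ℝ} {ξ : Fin d → ℝ} {q : Fin m → ℝ}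
    (hq : ∀ i, ∑ r, q r * N.cvec r i = ξ i) {B : Fin m → ℝ}
    (hB : ∀ r t, q r * t - lamv r * (exp t - 1) ≤ B r) : N.Lagr lamv ξ ≤ ∑ r, B r := by
  refine ciSup_le fun θ => ?_
  have hθ : ∑ i, θ i * ξ i = ∑ r, q r * ∑ i, θ i * N.cvec r i := by
    simp only [← hq, Finset.mul_sum]
    rw [Finset.sum_comm]
    exact Finset.sum_congr rfl fun r _ => Finset.sum_congr rfl fun i _ => by ring
  rw [hθ, ← Finset.sum_sub_distrib]
  exact Finset.sum_le_sum fun r _ => hB r _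

end CRN

theorem stmt16_general {d m : ℕ} (N : CRN d m)
    (hcone : ∀ ξ : Fin d → ℝ, ∃ q : Fin m → ℝ, (∀ r, 0 ≤ q r) ∧
      ∀ i, ∑ r, q r * N.cvec r i = ξ i)
    (D : Set (Fin d → ℝ)) (hD : IsCompact D) :
    let lamBar : ℝ := sSup {y | ∃ r, ∃ z ∈ D, y = N.lam r z}
    let cBar : ℝ := ⨆ r, (∑ i, (N.cin r i : ℝ))
    let qBar : ℝ := max (Real.exp 1)
      (sSup {y | ∃ ξ : Fin d → ℝ, (∑ i, |ξ i|) ≤ 1 ∧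
        y = sInf {c | ∃ q : Fin m → ℝ, (∀ r, 0 ≤ q r) ∧
          (∀ i, ∑ r, q r * N.cvec r i = ξ i) ∧ c = ⨆ r', |q r'|}})
    let kMin : ℝ := ⨅ r, min (N.k r) 1
    ∀ z ∈ D, (∀ i, 0 < z i) → ∀ ξ : Fin d → ℝ, (∑ i, |ξ i|) ≤ 1 →
      N.Lagr (fun r => N.lam r z) ξ ≤
        m * ((lamBar - qBar + qBar * Real.log (qBar / kMin)) +
          qBar * cBar * max (-(Real.log (⨅ i, z i))) 0) := by
  intro lamBar cBar qBar kMin z hzD hz ξ hξ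
  set G : ℝ → ℝ := fun Q =>
    lamBar - Q + Q * log (Q / kMin) + Q * cBar * max (-log (⨅ i, z i)) 0
  have hqBar : exp 1 ≤ qBar := le_max_left _ _
  have hbound : ∀ Q, qBar < Q → N.Lagr (fun r => N.lam r z) ξ ≤ ∑ _r : Fin m, G Q := by
    intro Q hQ
    obtain ⟨q, hq0, hqξ, hqQ⟩ := exists_conicRep_lt hcone hξ ((le_max_right _ _).trans_lt hQ)
    exact N.Lagr_le_sum hqξ fun r t => N.mul_sub_lam_mul_exp_sub_one_le hD hzD hz (hq0 r)
      (hqQ r).le (hqBar.trans hQ.le) r t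
  -- a sum over reactions rather than `m * G Q`: each summand supplies a reaction, whence `kMin > 0`
  have hcont : ContinuousAt (fun Q => ∑ _r : Fin m, G Q) qBar := by
    refine tendsto_finsetSum _ fun r _ => ?_
    have hkMin : 0 < kMin := N.iInf_min_k_pos r
    show ContinuousAt G qBar
    simp only [G]
    fun_prop (disch := positivity)
  calc N.Lagr (fun r => N.lam r z) ξ ≤ ∑ _r : Fin m, G qBar :=
        le_of_forall_gt_of_continuousAt hcont hbound
    _ = _ := by
        simp only [Finset.sum_const, Finset.card_univ, Fintype.card_fin, nsmul_eq_mul, G]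

theorem stmt16 {d m : ℕ} (hd : 0 < d) (hm : 0 < m) (N : CRN d m)
    (hcone : ∀ ξ : Fin d → ℝ, ∃ q : Fin m → ℝ, (∀ r, 0 ≤ q r) ∧
      ∀ i, ∑ r, q r * N.cvec r i = ξ i)
    (D : Set (Fin d → ℝ)) (hD : IsCompact D) (hDpos : ∀ x ∈ D, ∀ i, 0 ≤ x i) :
    let lamBar : ℝ := sSup {y | ∃ r, ∃ z ∈ D, y = N.lam r z}
    let cBar : ℝ := ⨆ r, (∑ i, (N.cin r i : ℝ))
    let qBar : ℝ := max (Real.exp 1)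
      (sSup {y | ∃ ξ : Fin d → ℝ, (∑ i, |ξ i|) ≤ 1 ∧
        y = sInf {c | ∃ q : Fin m → ℝ, (∀ r, 0 ≤ q r) ∧
          (∀ i, ∑ r, q r * N.cvec r i = ξ i) ∧ c = ⨆ r', |q r'|}})
    let kMin : ℝ := ⨅ r, min (N.k r) 1
    ∀ z ∈ D, (∀ i, 0 < z i) → ∀ ξ : Fin d → ℝ, (∑ i, |ξ i|) ≤ 1 →
      N.Lagr (fun r => N.lam r z) ξ ≤
        m * ((lamBar - qBar + qBar * Real.log (qBar / kMin)) +
          qBar * cBar * max (-(Real.log (⨅ i, z i))) 0) :=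
  stmt16_general N hcone D hD

end
end
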